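/- arXiv:1511.05535 — 5 statements merged into one kernel-verified Lean document; each statement's English description precedes it below -/
import Mathlib

section
/- Coefficients at the vertices (Proposition 3.5): Let k be a stepped surface obtained from fund by a finite number of allowed mutations in the T-system with principal coefficients, and let y_{(i,j),k} ∈ Trop(c) be the coefficient at the vertex (i,j) of the corresponding seed. If k(i,j) = m, k(i,j−1) = m+ε₁, k(i,j+1) = m+ε₂, k(i−1,j) = m+ε₃, k(i+1,j) = m+ε₄ with ε_ℓ ∈ {−1,1}, then y_{(i,j),k} = ( I(i,j,m−1)·J(i,j−1,m)^{[ε₁]₊}·J(i,j+1,m)^{[ε₂]₊} ) / ( J(i,j,m−1)·I(i−1,j,m)^{[ε₃]₊}·I(i+1,j,m)^{[ε₄]₊} ), which also equals ( J(i,j,m+1)·I(i−1,j,m)^{[−ε₃]₊}·I(i+1,j,m)^{[−ε₄]₊} ) / ( I(i,j,m+1)·J(i,j−1,m)^{[−ε₁]₊}·J(i,j+1,m)^{[−ε₂]₊} ), where [x]₊ = max(x,0). -/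
/-!
Every reachable seed is determined by its stepped surface `k`: the exchange matrix is
`exchangeMatrixOf k` (horizontal and vertical arrows oriented by the height difference, and a
diagonal arrow between opposite corners of equal height of a unit square whose other two corners
have different heights), and the coefficient at `(i, j)` is `coeffOf k i j`, the first formula.
This is proved by induction along the mutation sequence. An allowed mutation happens at a local
extremum of `k` of height `m`, where the coefficient collapses to `J(i,j,m+1) / I(i,j,m+1)` (local
minimum) or `I(i,j,m-1) / J(i,j,m-1)` (local maximum); since `I` and `J` have disjoint supports,
`y ⊕ 1` and `y / (y ⊕ 1)` are single products of `c`'s, and the mutated coefficients at the four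
neighbours pick up exactly the factor by which `coeffOf` changes there. The second formula agrees
with the first by the identity
`I(i,j,m-1) I(i,j,m+1) J(i,j-1,m) J(i,j+1,m) = J(i,j,m-1) J(i,j,m+1) I(i-1,j,m) I(i+1,j,m)`.
-/

noncomputable section
open Classical

namespace OctahedronTSystem

/-- A stepped surface: a height function on `ℤ × ℤ` changing by exactly `1`
between lattice-adjacent points. -/
def SteppedSurface (k : ℤ × ℤ → ℤ) : Prop :=
  ∀ a b : ℤ × ℤ, |a.1 - b.1| + |a.2 - b.2| = 1 → |k a - k b| = 1

/-- The fundamental stepped surface `fund(i,j) = ((i+j) mod 2) - 1`. -/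
def fund : ℤ × ℤ → ℤ := fun v => (v.1 + v.2) % 2 - 1

/-- Index type for the independent variables: `t(i,j)` on the left, `c(i,j)` on the right. -/
abbrev Var : Type := (ℤ × ℤ) ⊕ (ℤ × ℤ)

/-- The ambient field of rational functions over `ℚ` in the independent variables
`t(i,j)` and `c(i,j)`, `(i,j) ∈ ℤ × ℤ`. -/
abbrev F : Type := FractionRing (MvPolynomial Var ℚ)

/-- The variable `t(i,j)` as an element of the ambient field. -/
def tv (v : ℤ × ℤ) : F := algebraMap (MvPolynomial Var ℚ) F (MvPolynomial.X (Sum.inl v))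

/-- The variable `c(i,j)` as an element of the ambient field. -/
def cv (v : ℤ × ℤ) : F := algebraMap (MvPolynomial Var ℚ) F (MvPolynomial.X (Sum.inr v))

/-- `I(i,j,m) = ∏_{a=m+1}^{-m-1} c(i+a,j)` if `m < 0` and `1` otherwise
(the interval `[m+1, -m-1]` is empty when `m ≥ 0`). -/
def coefI {C : Type*} [CommMonoid C] (c : ℤ × ℤ → C) (i j m : ℤ) : C :=
  ∏ a ∈ Finset.Icc (m + 1) (-m - 1), c (i + a, j)

/-- `J(i,j,m) = ∏_{a=-m}^{m} c(i,j+a)` if `m ≥ 0` and `1` otherwise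
(the interval `[-m, m]` is empty when `m < 0`). -/
def coefJ {C : Type*} [CommMonoid C] (c : ℤ × ℤ → C) (i j m : ℤ) : C :=
  ∏ a ∈ Finset.Icc (-m) m, c (i, j + a)

/-- The tropical semifield `Trop(c(i,j) : (i,j) ∈ ℤ×ℤ)`: the free multiplicative abelian
group on the symbols `c(i,j)`, written additively as finitely supported exponent
functions `(ℤ × ℤ) →₀ ℤ`. -/
abbrev TropP : Type := (ℤ × ℤ) →₀ ℤ

/-- The auxiliary (tropical) addition `⊕`: exponentwise minimum.  The multiplicative
identity `1` of the tropical semifield is `0 : TropP`. -/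
def tropAdd (f g : TropP) : TropP := Finsupp.zipWith min (min_self 0) f g

/-- `I(i,j,m)` as an element of the tropical semifield (written additively). -/
def pI (i j m : ℤ) : TropP :=
  ∑ a ∈ Finset.Icc (m + 1) (-m - 1), Finsupp.single ((i + a, j) : ℤ × ℤ) (1 : ℤ)

/-- `J(i,j,m)` as an element of the tropical semifield (written additively). -/
def pJ (i j m : ℤ) : TropP :=
  ∑ a ∈ Finset.Icc (-m) m, Finsupp.single ((i, j + a) : ℤ × ℤ) (1 : ℤ)

/-- Embedding of the tropical semifield into the ambient field `F`, sending an exponent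
function to the corresponding Laurent monomial in the `c(i,j)`. -/
def embP (f : TropP) : F := ∏ v ∈ f.support, cv v ^ f v

/-- A (labelled) seed: cluster variables `x`, coefficients `y` in the tropical semifield,
and an exchange matrix `b`. -/
structure Seed where
  x : ℤ × ℤ → F
  y : ℤ × ℤ → TropP
  b : (ℤ × ℤ) → (ℤ × ℤ) → ℤ

/-- Seed mutation `μ_v` (coefficients written additively in the tropical semifield;
`ŷ⁺ = y(v)/(y(v) ⊕ 1)` becomes `s.y v - tropAdd (s.y v) 0` and
`ŷ⁻ = 1/(y(v) ⊕ 1)` becomes `-(tropAdd (s.y v) 0)`). -/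
def mutate (s : Seed) (v : ℤ × ℤ) : Seed where
  b := fun u w =>
    if u = v ∨ w = v then -s.b u w
    else s.b u w + (s.b u v).sign * max (s.b u v * s.b v w) 0
  y := fun u =>
    if u = v then -s.y v
    else s.y u + max (s.b v u) 0 • (s.y v - tropAdd (s.y v) 0)
           + max (-s.b v u) 0 • tropAdd (s.y v) 0
  x := fun u =>
    if u = v then
      (s.x v)⁻¹ *
        (embP (s.y v - tropAdd (s.y v) 0) *
            ∏ᶠ u' : ℤ × ℤ, s.x u' ^ (max (s.b u' v) 0).toNat +
         embP (-tropAdd (s.y v) 0) *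
            ∏ᶠ u' : ℤ × ℤ, s.x u' ^ (max (-s.b u' v) 0).toNat)
    else s.x u

/-- The initial seed of the T-system with principal coefficients: cluster variables
`t(i,j)`, coefficients `c(i,j)`, and the octahedron-quiver exchange matrix. -/
def initialSeed : Seed where
  x := tv
  y := fun v => Finsupp.single v 1
  b := fun u w =>
    (if (w.1 + w.2) % 2 = 0 then 1 else -1) *
      ((if u = (w.1 - 1, w.2) then 1 else 0) + (if u = (w.1 + 1, w.2) then 1 else 0)
        - (if u = (w.1, w.2 - 1) then 1 else 0) - (if u = (w.1, w.2 + 1) then 1 else 0))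

/-- `Reachable s k` : the seed `s`, with height function (stepped surface) `k`, is
obtained from the initial seed (with height function `fund`) by a finite sequence of
allowed mutations.  A mutation at `(i,j)` is allowed when the four lattice neighbours
have equal height; it is upward or downward according to that common height. -/
inductive Reachable : Seed → (ℤ × ℤ → ℤ) → Prop
  | init : Reachable initialSeed fund
  | up (s : Seed) (h : ℤ × ℤ → ℤ) (i j : ℤ) :
      Reachable s h →
      h (i - 1, j) = h (i, j) + 1 → h (i + 1, j) = h (i, j) + 1 →
      h (i, j - 1) = h (i, j) + 1 → h (i, j + 1) = h (i, j) + 1 →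
      Reachable (mutate s (i, j)) (Function.update h (i, j) (h (i, j) + 2))
  | down (s : Seed) (h : ℤ × ℤ → ℤ) (i j : ℤ) :
      Reachable s h →
      h (i - 1, j) = h (i, j) - 1 → h (i + 1, j) = h (i, j) - 1 →
      h (i, j - 1) = h (i, j) - 1 → h (i, j + 1) = h (i, j) - 1 →
      Reachable (mutate s (i, j)) (Function.update h (i, j) (h (i, j) - 2))

lemma pI_apply (i j m : ℤ) (w : ℤ × ℤ) :
    pI i j m w = if w.2 = j ∧ m + 1 ≤ w.1 - i ∧ w.1 - i ≤ -m - 1 then 1 else 0 := by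
  obtain ⟨x, y⟩ := w
  have key : ∀ a, (i + a = x ∧ j = y) ↔ (y = j ∧ a = x - i) := fun a => by omega
  simp only [pI, Finsupp.finsetSum_apply, Finsupp.single_apply, Prod.mk.injEq, key, ite_and]
  split_ifs <;> simp_all

lemma pJ_apply (i j m : ℤ) (w : ℤ × ℤ) :
    pJ i j m w = if w.1 = i ∧ -m ≤ w.2 - j ∧ w.2 - j ≤ m then 1 else 0 := by
  obtain ⟨x, y⟩ := w
  have key : ∀ a, (i = x ∧ j + a = y) ↔ (x = i ∧ a = y - j) := fun a => by omega
  simp only [pJ, Finsupp.finsetSum_apply, Finsupp.single_apply, Prod.mk.injEq, key, ite_and]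
  split_ifs <;> simp_all

lemma tropAdd_apply (f g : TropP) (w : ℤ × ℤ) : tropAdd f g w = min (f w) (g w) :=
  Finsupp.zipWith_apply ..

def HorizAdj (u w : ℤ × ℤ) : Prop := u.2 = w.2 ∧ (u.1 = w.1 + 1 ∨ u.1 = w.1 - 1)

def VertAdj (u w : ℤ × ℤ) : Prop := u.1 = w.1 ∧ (u.2 = w.2 + 1 ∨ u.2 = w.2 - 1)

def DiagAdj (u w : ℤ × ℤ) : Prop :=
  (u.1 = w.1 + 1 ∨ u.1 = w.1 - 1) ∧ (u.2 = w.2 + 1 ∨ u.2 = w.2 - 1)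

def NeighborsAt (k : ℤ × ℤ → ℤ) (i j h : ℤ) : Prop :=
  k (i - 1, j) = h ∧ k (i + 1, j) = h ∧ k (i, j - 1) = h ∧ k (i, j + 1) = h

namespace NeighborsAt

variable {k : ℤ × ℤ → ℤ} {i j h : ℤ}

lemma apply_of_horizAdj (hk : NeighborsAt k i j h) {u : ℤ × ℤ} (hu : HorizAdj u (i, j)) :
    k u = h := by
  obtain ⟨a, b⟩ := u
  obtain ⟨rfl, rfl | rfl⟩ : b = j ∧ (a = i + 1 ∨ a = i - 1) := hu
  exacts [hk.2.1, hk.1]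

lemma apply_of_vertAdj (hk : NeighborsAt k i j h) {u : ℤ × ℤ} (hu : VertAdj u (i, j)) :
    k u = h := by
  obtain ⟨a, b⟩ := u
  obtain ⟨rfl, rfl | rfl⟩ : a = i ∧ (b = j + 1 ∨ b = j - 1) := hu
  exacts [hk.2.2.2, hk.2.2.1]

lemma update (hk : NeighborsAt k i j h) (n : ℤ) :
    NeighborsAt (Function.update k (i, j) n) i j h := by
  simpa [NeighborsAt, Function.update_apply] using hk

end NeighborsAt

-- `(w.1, u.2)` and `(u.1, w.2)` are the other two corners of the unit square with diagonal `u w`.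
def exchangeMatrixOf (k : ℤ × ℤ → ℤ) (u w : ℤ × ℤ) : ℤ :=
  if HorizAdj u w then k u - k w
  else if VertAdj u w then k w - k u
  else if DiagAdj u w ∧ k u = k w then
    (if k (w.1, u.2) = k u + 1 then 1 else 0) - (if k (u.1, w.2) = k u + 1 then 1 else 0)
  else 0

lemma exchangeMatrixOf_swap (k : ℤ × ℤ → ℤ) (u w : ℤ × ℤ) :
    exchangeMatrixOf k w u = -exchangeMatrixOf k u w := by
  simp only [exchangeMatrixOf, HorizAdj, VertAdj, DiagAdj]
  split_ifs <;> omega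

lemma initialSeed_b (u w : ℤ × ℤ) : initialSeed.b u w = exchangeMatrixOf fund u w := by
  obtain ⟨a, b⟩ := u
  obtain ⟨c, d⟩ := w
  simp only [initialSeed, exchangeMatrixOf, HorizAdj, VertAdj, DiagAdj, fund, Prod.mk.injEq]
  split_ifs <;> omega

lemma exchangeMatrixOf_of_neighborsAt {k : ℤ × ℤ → ℤ} {i j σ : ℤ}
    (hk : NeighborsAt k i j (k (i, j) + σ)) (u : ℤ × ℤ) :
    exchangeMatrixOf k u (i, j) =
      if HorizAdj u (i, j) then σ else if VertAdj u (i, j) then -σ else 0 := by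
  obtain ⟨a, b⟩ := u
  have hH := hk.apply_of_horizAdj (u := (a, b))
  have hV := hk.apply_of_vertAdj (u := (a, b))
  have hD : DiagAdj (a, b) (i, j) → k (i, b) = k (i, j) + σ ∧ k (a, j) = k (i, j) + σ :=
    fun ⟨ha, hb⟩ => ⟨hk.apply_of_vertAdj ⟨rfl, hb⟩, hk.apply_of_horizAdj ⟨rfl, ha⟩⟩
  simp only [exchangeMatrixOf, HorizAdj, VertAdj, DiagAdj] at hH hV hD ⊢
  split_ifs <;> omega

lemma exchangeMatrixOf_of_diagAdj (k : ℤ × ℤ → ℤ) {u w : ℤ × ℤ} (huw : DiagAdj u w)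
    (hk : k u = k w) :
    exchangeMatrixOf k u w =
      (if k (w.1, u.2) = k u + 1 then 1 else 0) - (if k (u.1, w.2) = k u + 1 then 1 else 0) := by
  have hH : ¬HorizAdj u w := fun h => by simp only [HorizAdj, DiagAdj] at h huw; omega
  have hV : ¬VertAdj u w := fun h => by simp only [VertAdj, DiagAdj] at h huw; omega
  rw [exchangeMatrixOf, if_neg hH, if_neg hV, if_pos ⟨huw, hk⟩]

lemma exchangeMatrixOf_congr {k k' : ℤ × ℤ → ℤ} {u w : ℤ × ℤ} (hu : k' u = k u) (hw : k' w = k w)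
    (hc : DiagAdj u w → k' (w.1, u.2) = k (w.1, u.2) ∧ k' (u.1, w.2) = k (u.1, w.2)) :
    exchangeMatrixOf k' u w = exchangeMatrixOf k u w := by
  unfold exchangeMatrixOf
  rw [hu, hw]
  by_cases hd : DiagAdj u w
  · rw [(hc hd).1, (hc hd).2]
  · simp only [hd, false_and, if_false]

section ExchangeMatrixUpdate

variable {k : ℤ × ℤ → ℤ} {i j σ n : ℤ}

lemma exchangeMatrixOf_update_of_horizAdj_of_vertAdj (hk : NeighborsAt k i j (k (i, j) + σ))
    (hσ : σ = 1 ∨ σ = -1) (hn : n = k (i, j) + 2 * σ) {u w : ℤ × ℤ}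
    (hu : HorizAdj u (i, j)) (hw : VertAdj w (i, j)) :
    exchangeMatrixOf (Function.update k (i, j) n) u w = exchangeMatrixOf k u w + σ := by
  have hku := hk.apply_of_horizAdj hu
  have hkw := hk.apply_of_vertAdj hw
  obtain ⟨a, b⟩ := u
  obtain ⟨c, d⟩ := w
  obtain ⟨hb, ha⟩ : b = j ∧ (a = i + 1 ∨ a = i - 1) := hu
  obtain ⟨hc, hd⟩ : c = i ∧ (d = j + 1 ∨ d = j - 1) := hw
  subst b c
  have hdiag : DiagAdj (a, j) (i, d) := by simp only [DiagAdj]; omega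
  have hne : ∀ x y, (x = a ∨ y = d) → Function.update k (i, j) n (x, y) = k (x, y) := by
    intro x y hxy
    exact Function.update_of_ne (by simp only [ne_eq, Prod.mk.injEq]; omega) _ _
  rw [exchangeMatrixOf_of_diagAdj _ hdiag
      (by rw [hne _ _ (.inl rfl), hne _ _ (.inr rfl), hku, hkw]),
    exchangeMatrixOf_of_diagAdj _ hdiag (by rw [hku, hkw])]
  simp only [Function.update_self, hne _ _ (.inl rfl), hku]
  split_ifs <;> omega

lemma exchangeMatrixOf_update_of_not_corner {u w : ℤ × ℤ} (hu : u ≠ (i, j)) (hw : w ≠ (i, j))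
    (huw : ¬(HorizAdj u (i, j) ∧ VertAdj w (i, j)))
    (hwu : ¬(VertAdj u (i, j) ∧ HorizAdj w (i, j))) :
    exchangeMatrixOf (Function.update k (i, j) n) u w = exchangeMatrixOf k u w := by
  refine exchangeMatrixOf_congr (Function.update_of_ne hu _ _) (Function.update_of_ne hw _ _)
    fun hd => ⟨Function.update_of_ne ?_ _ _, Function.update_of_ne ?_ _ _⟩ <;>
  · obtain ⟨a, b⟩ := u
    obtain ⟨c, d⟩ := w
    simp only [HorizAdj, VertAdj, DiagAdj, ne_eq, Prod.mk.injEq] at hu hw huw hwu hd ⊢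
    omega

end ExchangeMatrixUpdate

lemma mutation_correction_of_neighborsAt {k : ℤ × ℤ → ℤ} {i j σ : ℤ}
    (hk : NeighborsAt k i j (k (i, j) + σ)) (hσ : σ = 1 ∨ σ = -1) (u w : ℤ × ℤ) :
    (exchangeMatrixOf k u (i, j)).sign *
        max (exchangeMatrixOf k u (i, j) * exchangeMatrixOf k (i, j) w) 0 =
      if HorizAdj u (i, j) ∧ VertAdj w (i, j) then σ
      else if VertAdj u (i, j) ∧ HorizAdj w (i, j) then -σ else 0 := by
  have hHV : ∀ x, ¬(HorizAdj x (i, j) ∧ VertAdj x (i, j)) := fun x ⟨⟨_, h⟩, h', _⟩ => by omega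
  rw [exchangeMatrixOf_swap k w (i, j), exchangeMatrixOf_of_neighborsAt hk,
    exchangeMatrixOf_of_neighborsAt hk]
  rcases hσ with rfl | rfl <;> split_ifs <;> simp_all

lemma exchangeMatrixOf_mutate {k : ℤ × ℤ → ℤ} {i j σ n : ℤ}
    (hk : NeighborsAt k i j (k (i, j) + σ)) (hσ : σ = 1 ∨ σ = -1) (hn : n = k (i, j) + 2 * σ)
    (u w : ℤ × ℤ) :
    exchangeMatrixOf (Function.update k (i, j) n) u w =
      if u = (i, j) ∨ w = (i, j) then -exchangeMatrixOf k u w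
      else exchangeMatrixOf k u w + (exchangeMatrixOf k u (i, j)).sign *
        max (exchangeMatrixOf k u (i, j) * exchangeMatrixOf k (i, j) w) 0 := by
  set k' := Function.update k (i, j) n
  have hk' : NeighborsAt k' i j (k' (i, j) + -σ) := by
    convert hk.update n using 1
    simp only [k', Function.update_self]
    omega
  split_ifs with hv
  · have hrev : ∀ x, exchangeMatrixOf k' x (i, j) = -exchangeMatrixOf k x (i, j) := fun x => by
      rw [exchangeMatrixOf_of_neighborsAt hk', exchangeMatrixOf_of_neighborsAt hk]
      split_ifs <;> simp
    rcases hv with rfl | rfl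
    · rw [exchangeMatrixOf_swap k' w, exchangeMatrixOf_swap k w, hrev]
    · exact hrev u
  · rw [not_or] at hv
    rw [mutation_correction_of_neighborsAt hk hσ]
    split_ifs with hHV hVH
    · exact exchangeMatrixOf_update_of_horizAdj_of_vertAdj hk hσ hn hHV.1 hHV.2
    · rw [exchangeMatrixOf_swap k' w, exchangeMatrixOf_swap k w,
        exchangeMatrixOf_update_of_horizAdj_of_vertAdj hk hσ hn hVH.2 hVH.1]
      ring
    · rw [add_zero]
      exact exchangeMatrixOf_update_of_not_corner hv.1 hv.2 hHV hVH

-- The first formula of the statement, with `εₗ` read off from `k`.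
def coeffOf (k : ℤ × ℤ → ℤ) (i j : ℤ) : TropP :=
  pI i j (k (i, j) - 1) + max (k (i, j - 1) - k (i, j)) 0 • pJ i (j - 1) (k (i, j))
      + max (k (i, j + 1) - k (i, j)) 0 • pJ i (j + 1) (k (i, j))
    - (pJ i j (k (i, j) - 1) + max (k (i - 1, j) - k (i, j)) 0 • pI (i - 1) j (k (i, j))
      + max (k (i + 1, j) - k (i, j)) 0 • pI (i + 1) j (k (i, j)))

lemma coeffOf_fund (i j : ℤ) : coeffOf fund i j = Finsupp.single (i, j) 1 := by
  ext ⟨x, y⟩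
  simp only [coeffOf, fund, Finsupp.coe_add, Finsupp.coe_sub, Finsupp.coe_smul, Pi.add_apply,
    Pi.sub_apply, Pi.smul_apply, smul_eq_mul, pI_apply, pJ_apply, Finsupp.single_apply,
    Prod.mk.injEq]
  split_ifs <;> omega

lemma pI_add_pJ_octahedron (i j m : ℤ) :
    pI i j (m - 1) + pI i j (m + 1) + pJ i (j - 1) m + pJ i (j + 1) m =
      pJ i j (m - 1) + pJ i j (m + 1) + pI (i - 1) j m + pI (i + 1) j m := by
  ext ⟨x, y⟩
  simp only [Finsupp.coe_add, Pi.add_apply, pI_apply, pJ_apply]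
  split_ifs <;> omega

lemma coefficient_forms_eq (i j m ε₁ ε₂ ε₃ ε₄ : ℤ)
    (he₁ : ε₁ = 1 ∨ ε₁ = -1) (he₂ : ε₂ = 1 ∨ ε₂ = -1)
    (he₃ : ε₃ = 1 ∨ ε₃ = -1) (he₄ : ε₄ = 1 ∨ ε₄ = -1) :
    pI i j (m - 1) + max ε₁ 0 • pJ i (j - 1) m + max ε₂ 0 • pJ i (j + 1) m
        - (pJ i j (m - 1) + max ε₃ 0 • pI (i - 1) j m + max ε₄ 0 • pI (i + 1) j m) =
      pJ i j (m + 1) + max (-ε₃) 0 • pI (i - 1) j m + max (-ε₄) 0 • pI (i + 1) j m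
        - (pI i j (m + 1) + max (-ε₁) 0 • pJ i (j - 1) m + max (-ε₂) 0 • pJ i (j + 1) m) := by
  have hpos : ∀ ε : ℤ, (ε = 1 ∨ ε = -1) → max (-ε) 0 = 1 - max ε 0 := by omega
  rw [hpos ε₁ he₁, hpos ε₂ he₂, hpos ε₃ he₃, hpos ε₄ he₄]
  linear_combination (norm := module) pI_add_pJ_octahedron i j m

lemma coeffOf_of_neighborsAt {k : ℤ × ℤ → ℤ} {i j σ : ℤ}
    (hk : NeighborsAt k i j (k (i, j) + σ)) (hσ : σ = 1 ∨ σ = -1) :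
    coeffOf k i j = σ • (pJ i j (k (i, j) + σ) - pI i j (k (i, j) + σ)) := by
  obtain ⟨h₁, h₂, h₃, h₄⟩ := hk
  rw [coeffOf, h₁, h₂, h₃, h₄, add_sub_cancel_left]
  rcases hσ with rfl | rfl
  · rw [coefficient_forms_eq i j _ 1 1 1 1 (.inl rfl) (.inl rfl) (.inl rfl) (.inl rfl)]
    norm_num
  · norm_num
    abel

section MutationIncrement

variable {σ : ℤ} (hσ : σ = 1 ∨ σ = -1) (i j m : ℤ)
include hσ

-- `pJ i j m` and `pI i j m` have disjoint supports, so `tropAdd · 0` picks out the negative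
-- part of `σ • (pJ i j m - pI i j m)`.
lemma mutation_increment_horizAdj :
    max (-σ) 0 • (σ • (pJ i j m - pI i j m)) - (-σ) • tropAdd (σ • (pJ i j m - pI i j m)) 0 =
      -σ • pI i j m := by
  ext x
  simp only [tropAdd_apply, Finsupp.coe_sub, Finsupp.coe_smul, Finsupp.coe_zero, Pi.sub_apply,
    Pi.smul_apply, Pi.zero_apply, smul_eq_mul, pI_apply, pJ_apply]
  rcases hσ with rfl | rfl <;> split_ifs <;> omega

lemma mutation_increment_vertAdj :
    max σ 0 • (σ • (pJ i j m - pI i j m)) - σ • tropAdd (σ • (pJ i j m - pI i j m)) 0 =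
      σ • pJ i j m := by
  ext x
  simp only [tropAdd_apply, Finsupp.coe_sub, Finsupp.coe_smul, Finsupp.coe_zero, Pi.sub_apply,
    Pi.smul_apply, Pi.zero_apply, smul_eq_mul, pI_apply, pJ_apply]
  rcases hσ with rfl | rfl <;> split_ifs <;> omega

end MutationIncrement

section CoeffUpdate

variable (k : ℤ × ℤ → ℤ) {i j : ℤ} (n : ℤ) {a b : ℤ}

lemma update_apply_of_ne {x y : ℤ} (h : x ≠ i ∨ y ≠ j) :
    Function.update k (i, j) n (x, y) = k (x, y) :=
  Function.update_of_ne (by rw [ne_eq, Prod.mk.injEq, not_and_or]; exact h) _ _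

lemma coeffOf_update_of_horizAdj (h : HorizAdj (a, b) (i, j)) :
    coeffOf (Function.update k (i, j) n) a b = coeffOf k a b
      - (max (n - k (a, b)) 0 - max (k (i, j) - k (a, b)) 0) • pI i j (k (a, b)) := by
  obtain ⟨hb, ha⟩ : b = j ∧ (a = i + 1 ∨ a = i - 1) := h
  subst hb
  rcases ha with rfl | rfl <;>
  · simp (disch := omega) only [coeffOf, add_sub_cancel_right, sub_add_cancel,
      Function.update_self, update_apply_of_ne, sub_smul]
    abel

lemma coeffOf_update_of_vertAdj (h : VertAdj (a, b) (i, j)) :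
    coeffOf (Function.update k (i, j) n) a b = coeffOf k a b
      + (max (n - k (a, b)) 0 - max (k (i, j) - k (a, b)) 0) • pJ i j (k (a, b)) := by
  obtain ⟨ha, hb⟩ : a = i ∧ (b = j + 1 ∨ b = j - 1) := h
  subst ha
  rcases hb with rfl | rfl <;>
  · simp (disch := omega) only [coeffOf, add_sub_cancel_right, sub_add_cancel,
      Function.update_self, update_apply_of_ne, sub_smul]
    abel

lemma coeffOf_update_of_not_adj (h : (a, b) ≠ (i, j)) (hH : ¬HorizAdj (a, b) (i, j))
    (hV : ¬VertAdj (a, b) (i, j)) :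
    coeffOf (Function.update k (i, j) n) a b = coeffOf k a b := by
  simp only [HorizAdj, VertAdj, ne_eq, Prod.mk.injEq] at h hH hV
  simp (disch := omega) only [coeffOf, update_apply_of_ne]

end CoeffUpdate

lemma mutate_y_self (s : Seed) (v : ℤ × ℤ) : (mutate s v).y v = -s.y v := if_pos rfl

lemma mutate_y_of_ne (s : Seed) {u v : ℤ × ℤ} (h : u ≠ v) :
    (mutate s v).y u = s.y u + max (s.b v u) 0 • s.y v - s.b v u • tropAdd (s.y v) 0 := by
  simp only [mutate, if_neg h]
  linear_combination (norm := module)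
    -(max_zero_sub_max_neg_zero_eq_self (s.b v u) • tropAdd (s.y v) 0)

lemma mutate_b (s : Seed) (v u w : ℤ × ℤ) :
    (mutate s v).b u w =
      if u = v ∨ w = v then -s.b u w
      else s.b u w + (s.b u v).sign * max (s.b u v * s.b v w) 0 := rfl

structure IsSurfaceSeed (s : Seed) (k : ℤ × ℤ → ℤ) : Prop where
  b_eq : ∀ u w, s.b u w = exchangeMatrixOf k u w
  y_eq : ∀ a b, s.y (a, b) = coeffOf k a b

lemma isSurfaceSeed_initialSeed : IsSurfaceSeed initialSeed fund :=
  ⟨initialSeed_b, fun a b => (coeffOf_fund a b).symm⟩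

namespace IsSurfaceSeed

variable {s : Seed} {k : ℤ × ℤ → ℤ} {i j σ n : ℤ}

lemma mutate_y (hs : IsSurfaceSeed s k) (hk : NeighborsAt k i j (k (i, j) + σ))
    (hσ : σ = 1 ∨ σ = -1) (hn : n = k (i, j) + 2 * σ) (a b : ℤ) :
    (mutate s (i, j)).y (a, b) = coeffOf (Function.update k (i, j) n) a b := by
  by_cases hv : (a, b) = (i, j)
  · obtain ⟨rfl, rfl⟩ := Prod.mk.inj hv
    have hk' : NeighborsAt (Function.update k (a, b) n) a b
        (Function.update k (a, b) n (a, b) + -σ) := by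
      convert hk.update n using 1
      rw [Function.update_self]
      omega
    rw [mutate_y_self, hs.y_eq, coeffOf_of_neighborsAt hk hσ,
      coeffOf_of_neighborsAt hk' (by omega), Function.update_self,
      show n + -σ = k (a, b) + σ by omega, neg_smul]
  rw [mutate_y_of_ne s hv, hs.b_eq, hs.y_eq, hs.y_eq, exchangeMatrixOf_swap,
    exchangeMatrixOf_of_neighborsAt hk, coeffOf_of_neighborsAt hk hσ]
  have hstep : max (n - (k (i, j) + σ)) 0 - max (k (i, j) - (k (i, j) + σ)) 0 = σ := by omega
  split_ifs with hH hV
  · rw [add_sub_assoc, mutation_increment_horizAdj hσ, coeffOf_update_of_horizAdj k n hH,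
      hk.apply_of_horizAdj hH, hstep, neg_smul, sub_eq_add_neg]
  · rw [neg_neg, add_sub_assoc, mutation_increment_vertAdj hσ, coeffOf_update_of_vertAdj k n hV,
      hk.apply_of_vertAdj hV, hstep]
  · rw [coeffOf_update_of_not_adj k n hv hH hV]
    simp

lemma mutate_update (hs : IsSurfaceSeed s k) (hk : NeighborsAt k i j (k (i, j) + σ))
    (hσ : σ = 1 ∨ σ = -1) (hn : n = k (i, j) + 2 * σ) :
    IsSurfaceSeed (mutate s (i, j)) (Function.update k (i, j) n) where
  b_eq u w := by
    rw [mutate_b, exchangeMatrixOf_mutate hk hσ hn, hs.b_eq, hs.b_eq, hs.b_eq]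
  y_eq := hs.mutate_y hk hσ hn

end IsSurfaceSeed

lemma Reachable.isSurfaceSeed {s : Seed} {k : ℤ × ℤ → ℤ} (h : Reachable s k) :
    IsSurfaceSeed s k := by
  induction h with
  | init => exact isSurfaceSeed_initialSeed
  | up s k i j _ h₁ h₂ h₃ h₄ ih => exact ih.mutate_update ⟨h₁, h₂, h₃, h₄⟩ (.inl rfl) (by ring)
  | down s k i j _ h₁ h₂ h₃ h₄ ih =>
    exact ih.mutate_update (σ := -1) (by simp only [NeighborsAt]; omega) (.inr rfl) (by ring)

/-- **Proposition 3.5** (coefficients at the vertices).  For a seed reached from the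
initial seed of the T-system with principal coefficients, with height function `k`
satisfying `k(i,j) = m`, `k(i,j∓1) = m + ε₁/ε₂`, `k(i∓1,j) = m + ε₃/ε₄`, the coefficient
at `(i,j)` equals (written additively in the tropical semifield, division becoming
subtraction, `[x]₊ = max x 0`):
`I(i,j,m-1) J(i,j-1,m)^{[ε₁]₊} J(i,j+1,m)^{[ε₂]₊} / (J(i,j,m-1) I(i-1,j,m)^{[ε₃]₊} I(i+1,j,m)^{[ε₄]₊})`
and also
`J(i,j,m+1) I(i-1,j,m)^{[-ε₃]₊} I(i+1,j,m)^{[-ε₄]₊} / (I(i,j,m+1) J(i,j-1,m)^{[-ε₁]₊} J(i,j+1,m)^{[-ε₂]₊})`. -/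
theorem coefficient_at_vertex
    (s : Seed) (k : ℤ × ℤ → ℤ) (hreach : Reachable s k)
    (i j m ε₁ ε₂ ε₃ ε₄ : ℤ)
    (he₁ : ε₁ = 1 ∨ ε₁ = -1) (he₂ : ε₂ = 1 ∨ ε₂ = -1)
    (he₃ : ε₃ = 1 ∨ ε₃ = -1) (he₄ : ε₄ = 1 ∨ ε₄ = -1)
    (h0 : k (i, j) = m)
    (h1 : k (i, j - 1) = m + ε₁) (h2 : k (i, j + 1) = m + ε₂)
    (h3 : k (i - 1, j) = m + ε₃) (h4 : k (i + 1, j) = m + ε₄) :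
    s.y (i, j) =
        pI i j (m - 1) + max ε₁ 0 • pJ i (j - 1) m + max ε₂ 0 • pJ i (j + 1) m
          - (pJ i j (m - 1) + max ε₃ 0 • pI (i - 1) j m + max ε₄ 0 • pI (i + 1) j m) ∧
    s.y (i, j) =
        pJ i j (m + 1) + max (-ε₃) 0 • pI (i - 1) j m + max (-ε₄) 0 • pI (i + 1) j m
          - (pI i j (m + 1) + max (-ε₁) 0 • pJ i (j - 1) m + max (-ε₂) 0 • pJ i (j + 1) m) := by
  have hfirst : s.y (i, j) =
      pI i j (m - 1) + max ε₁ 0 • pJ i (j - 1) m + max ε₂ 0 • pJ i (j + 1) m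
        - (pJ i j (m - 1) + max ε₃ 0 • pI (i - 1) j m + max ε₄ 0 • pI (i + 1) j m) := by
    rw [hreach.isSurfaceSeed.y_eq, coeffOf, h0, h1, h2, h3, h4]
    simp only [add_sub_cancel_left]
  exact ⟨hfirst, hfirst.trans (coefficient_forms_eq i j m ε₁ ε₂ ε₃ ε₄ he₁ he₂ he₃ he₄)⟩

end OctahedronTSystem
end
end

section
/- Square faces (Proposition prop:main, part 1): Let G = G_{p,k} be the graph with open faces associated with p and an admissible stepped surface k (with k₀ ≥ k(i₀,j₀) and k ≥ fund). If (i,j) ∈ F̊ and all four lattice-neighbors (i±1,j), (i,j±1) have the same height under k, then the face (i,j) of G is a square, i.e. it is bounded by exactly four edges, two horizontal and two vertical. -/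
noncomputable section
open Classical

namespace OctahedronTSystem

/-- Edges of the bipartite graph `G_k` (the planar dual of the quiver `Q_k`), indexed by
the arrow of `Q_k` they cross:
* `h i j` : the horizontal edge dual to the vertical lattice edge from `(i,j)` to `(i,j+1)`
  (the face `(i,j)` lies directly below it, the face `(i,j+1)` directly above it);
* `v i j` : the vertical edge dual to the horizontal lattice edge from `(i,j)` to `(i+1,j)`;
* `d i j` : the diagonal edge inside the unit square with lower-left corner `(i,j)`
  (present exactly when that square carries a diagonal arrow). -/
inductive Edge : Type
  | h : ℤ → ℤ → Edge
  | v : ℤ → ℤ → Edge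
  | d : ℤ → ℤ → Edge
  deriving DecidableEq

/-- A vertex of `G_k`: a (square or triangular) face of the quiver `Q_k`, recorded as the
unit square (lower-left corner) containing it together with a Boolean: `false` for the
part containing the bottom side of the square, `true` for the part containing the top
side (used only when the square is split by a diagonal). -/
abbrev Vtx : Type := (ℤ × ℤ) × Bool

namespace Edge

/-- The part of the square `s` touching its west side. -/
def tAD (k : ℤ × ℤ → ℤ) (s : ℤ × ℤ) : Bool := decide (k (s.1 + 1, s.2) ≠ k (s.1, s.2 + 1))

/-- The part of the square `s` touching its east side. -/
def tBC (k : ℤ × ℤ → ℤ) (s : ℤ × ℤ) : Bool := decide (k s ≠ k (s.1 + 1, s.2 + 1))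

/-- Endpoints of an edge: `(left, right)` for horizontal and diagonal edges,
`(bottom, top)` for vertical ones. -/
def ends (k : ℤ × ℤ → ℤ) : Edge → Vtx × Vtx
  | h i j => (((i - 1, j), tBC k (i - 1, j)), ((i, j), tAD k (i, j)))
  | v i j => (((i, j - 1), tAD k (i, j - 1) || tBC k (i, j - 1)), ((i, j), false))
  | d i j => (((i, j), tAD k (i, j)), ((i, j), tBC k (i, j)))

/-- `x` is an endpoint of the edge `e`. -/
def mem (k : ℤ × ℤ → ℤ) (x : Vtx) (e : Edge) : Prop :=
  x = (ends k e).1 ∨ x = (ends k e).2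

/-- The edge is present in the graph `G_k` (diagonal edges exist only in squares split
by a diagonal arrow of the quiver). -/
def valid (k : ℤ × ℤ → ℤ) : Edge → Prop
  | h _ _ => True
  | v _ _ => True
  | d i j => k (i, j) ≠ k (i + 1, j + 1) ∨ k (i + 1, j) ≠ k (i, j + 1)

/-- The edge `e` is a side of the face `f` of `G_k` (faces are indexed by the quiver
vertices `(i,j) ∈ ℤ × ℤ`; an edge is a side of the two faces corresponding to the two
endpoints of the arrow it crosses). -/
def isSide (k : ℤ × ℤ → ℤ) (f : ℤ × ℤ) : Edge → Prop
  | h i j => f = (i, j) ∨ f = (i, j + 1)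
  | v i j => f = (i, j) ∨ f = (i + 1, j)
  | d i j => if tAD k (i, j) then f = (i, j) ∨ f = (i + 1, j + 1)
             else f = (i + 1, j) ∨ f = (i, j + 1)

def isHoriz : Edge → Prop
  | h _ _ => True
  | _ => False

def isVert : Edge → Prop
  | v _ _ => True
  | _ => False

def isDiag : Edge → Prop
  | d _ _ => True
  | _ => False

end Edge

/-- A vertex is white when the arrows around the corresponding face of `Q_k` run
counterclockwise and black when they run clockwise. -/
def isWhite (k : ℤ × ℤ → ℤ) (x : Vtx) : Bool :=
  decide (k (x.1.1 + 1, x.1.2) < k x.1) != x.2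

/-- Source of an oriented edge: horizontal and diagonal edges are oriented from left to
right, vertical edges from their black endpoint to their white endpoint. -/
def Edge.src (k : ℤ × ℤ → ℤ) (e : Edge) : Vtx :=
  match e with
  | Edge.v _ _ =>
      if isWhite k (Edge.ends k e).1 then (Edge.ends k e).2 else (Edge.ends k e).1
  | _ => (Edge.ends k e).1

/-- Target of an oriented edge. -/
def Edge.dst (k : ℤ × ℤ → ℤ) (e : Edge) : Vtx :=
  match e with
  | Edge.v _ _ =>
      if isWhite k (Edge.ends k e).1 then (Edge.ends k e).1 else (Edge.ends k e).2
  | _ => (Edge.ends k e).2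

/-- The set `F̊` of closed faces. -/
def innerF (i₀ j₀ k₀ : ℤ) (k : ℤ × ℤ → ℤ) : Set (ℤ × ℤ) :=
  {f | |f.1 - i₀| + |f.2 - j₀| < k₀ - k f}

/-- The set `∂F` of open faces. -/
def bdryF (i₀ j₀ k₀ : ℤ) (k : ℤ × ℤ → ℤ) : Set (ℤ × ℤ) :=
  if k₀ = k (i₀, j₀) then {(i₀, j₀)}
  else {f | f ∉ innerF i₀ j₀ k₀ k ∧ ∃ g ∈ innerF i₀ j₀ k₀ k, |f.1 - g.1| + |f.2 - g.2| = 1}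

/-- The set `F̊ ∪ ∂F` of all faces of the closure. -/
def allF (i₀ j₀ k₀ : ℤ) (k : ℤ × ℤ → ℤ) : Set (ℤ × ℤ) :=
  innerF i₀ j₀ k₀ k ∪ bdryF i₀ j₀ k₀ k

/-- The edge set of the graph with open faces `G = G_{p,k}`: the finite subgraph of `G_k`
generated by the faces in `F̊`. -/
def EG (i₀ j₀ k₀ : ℤ) (k : ℤ × ℤ → ℤ) : Set Edge :=
  {e | e.valid k ∧ ∃ f ∈ innerF i₀ j₀ k₀ k, e.isSide k f}

/-- The adjusted stepped surface `k_p(i,j) = min (k(i,j), k₀ - |i-i₀| - |j-j₀|)`. -/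
def kAdj (i₀ j₀ k₀ : ℤ) (k : ℤ × ℤ → ℤ) : ℤ × ℤ → ℤ :=
  fun f => min (k f) (k₀ - |f.1 - i₀| - |f.2 - j₀|)

/-- The edge set of the closure `Ḡ` of `G`: the finite subgraph of `G_{k_p}` generated by
the faces in `F̊ ∪ ∂F`. -/
def EGbar (i₀ j₀ k₀ : ℤ) (k : ℤ × ℤ → ℤ) : Set Edge :=
  {e | e.valid (kAdj i₀ j₀ k₀ k) ∧ ∃ f ∈ allF i₀ j₀ k₀ k, e.isSide (kAdj i₀ j₀ k₀ k) f}

/-- The vertex set of the graph with edge set `E`. -/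
def VG (k : ℤ × ℤ → ℤ) (E : Set Edge) : Set Vtx := {x | ∃ e ∈ E, Edge.mem k x e}

/-- A perfect matching of the graph with edge set `E`. -/
def IsPerfectMatching (k : ℤ × ℤ → ℤ) (E M : Set Edge) : Prop :=
  M ⊆ E ∧ ∀ x ∈ VG k E, ∃! e, e ∈ M ∧ Edge.mem k x e

/-- The edge set of the infinite graph `G_∞ = G_{k_p}`. -/
def Einf (i₀ j₀ k₀ : ℤ) (k : ℤ × ℤ → ℤ) : Set Edge := {e | e.valid (kAdj i₀ j₀ k₀ k)}

/-- Acceptable perfect matchings of `G_∞`: perfect matchings `M` of `G_∞` such that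
`M \ E(G)` is exactly the set of all diagonal edges of `E(G_∞) \ E(G)`. -/
def Acceptable (i₀ j₀ k₀ : ℤ) (k : ℤ × ℤ → ℤ) : Set (Set Edge) :=
  {M | IsPerfectMatching (kAdj i₀ j₀ k₀ k) (Einf i₀ j₀ k₀ k) M ∧
       M \ EG i₀ j₀ k₀ k = {e | e ∈ Einf i₀ j₀ k₀ k ∧ e ∉ EG i₀ j₀ k₀ k ∧ e.isDiag}}

/-- The set `Diag(E(Ḡ) \ E(G))` of diagonal edges of the closure not in `G`. -/
def diagExt (i₀ j₀ k₀ : ℤ) (k : ℤ × ℤ → ℤ) : Set Edge :=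
  {e | e ∈ EGbar i₀ j₀ k₀ k ∧ e ∉ EG i₀ j₀ k₀ k ∧ e.isDiag}

/-- `M̄set = { M ∪ Diag(E(Ḡ)\E(G)) : M a perfect matching of G }`. -/
def MbarSet (i₀ j₀ k₀ : ℤ) (k : ℤ × ℤ → ℤ) : Set (Set Edge) :=
  {N | ∃ M, IsPerfectMatching k (EG i₀ j₀ k₀ k) M ∧ N = M ∪ diagExt i₀ j₀ k₀ k}

/-- The set of all white-black horizontal edges (white endpoint on the left) and all
diagonal edges of the graph with edge set `E`; for `E = E(Ḡ)` this is `M̄₀`, for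
`E = E(G)` it is `M₀`. -/
def M0 (k : ℤ × ℤ → ℤ) (E : Set Edge) : Set Edge :=
  {e ∈ E | e.isDiag ∨ (e.isHoriz ∧ isWhite k (Edge.ends k e).1 = true)}

/-- `j ∈ NSet k M i` iff the white-black horizontal edge `N(i,j)` (with face `(i,j)`
directly below it) belongs to `M`. -/
def NSet (k : ℤ × ℤ → ℤ) (M : Set Edge) (i : ℤ) : Set ℤ :=
  {j | Edge.h i j ∈ M ∧ isWhite k (Edge.ends k (Edge.h i j)).1 = true}

/-- `j ∈ SSet k M i` iff the black-white horizontal edge `S(i,j)` (with face `(i,j)`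
directly above it) belongs to `M`. -/
def SSet (k : ℤ × ℤ → ℤ) (M : Set Edge) (i : ℤ) : Set ℤ :=
  {j | Edge.h i (j - 1) ∈ M ∧ isWhite k (Edge.ends k (Edge.h i (j - 1))).1 = false}

/-- A perfect pairing of the horizontal edges of a matching `M`: a set of allowed pairs
`(S(i,j₁), N(i,j₂))`, `j₁ ≤ j₂`, in the same column, using each `S`-edge and each
`N`-edge of `M` exactly once, and noncrossing (this characterises the pairing produced
by the bottom-to-top reading procedure). -/
def IsPerfectPairing (k : ℤ × ℤ → ℤ) (M : Set Edge)
    (P : Set ((ℤ × ℤ) × (ℤ × ℤ))) : Prop :=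
  (∀ q ∈ P, q.1.1 = q.2.1 ∧ q.1.2 ≤ q.2.2 ∧
      q.1.2 ∈ SSet k M q.1.1 ∧ q.2.2 ∈ NSet k M q.2.1) ∧
  (∀ i j : ℤ, j ∈ SSet k M i → ∃! q, q ∈ P ∧ q.1 = (i, j)) ∧
  (∀ i j : ℤ, j ∈ NSet k M i → ∃! q, q ∈ P ∧ q.2 = (i, j)) ∧
  (∀ q ∈ P, ∀ q' ∈ P, q.1.1 = q'.1.1 →
      ¬(q.1.2 < q'.1.2 ∧ q'.1.2 ≤ q.2.2 ∧ q.2.2 < q'.2.2))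

/-- The weight `∏_{a=j₁-k(i,j₁)-1}^{j₂+k(i,j₂)+1} c(i,a)` of an allowed pair
`((i,j₁),(i,j₂))`. -/
def pairWeight (k : ℤ × ℤ → ℤ) (q : (ℤ × ℤ) × (ℤ × ℤ)) : F :=
  ∏ a ∈ Finset.Icc (q.1.2 - k q.1 - 1) (q.2.2 + k q.2 + 1), cv (q.1.1, a)

/-- The pairing-weight: product of the weights of all allowed pairs of a perfect pairing. -/
def wp (k : ℤ × ℤ → ℤ) (P : Set ((ℤ × ℤ) × (ℤ × ℤ))) : F :=
  ∏ᶠ q ∈ P, pairWeight k q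

/-- The sides of the face `f` among the edges `E`. -/
def sides (k : ℤ × ℤ → ℤ) (E : Set Edge) (f : ℤ × ℤ) : Set Edge :=
  {e ∈ E | e.isSide k f}

/-- `⌈(b - a)/2⌉` where `a` (resp. `b`) is the number of sides of the face `f` lying in
(resp. not in) the matching `M`. -/
def faceExp (k : ℤ × ℤ → ℤ) (E M : Set Edge) (f : ℤ × ℤ) : ℤ :=
  ⌈((((sides k E f \ M).ncard : ℚ) - ((sides k E f ∩ M).ncard : ℚ)) / 2 : ℚ)⌉

/-- The face-weight of a matching of the graph with open faces `G`: closed faces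
contribute `t(f)^(⌈(b-a)/2⌉ - 1)` and open faces contribute `t(f)^⌈(b-a)/2⌉`. -/
def wfOpen (i₀ j₀ k₀ : ℤ) (k : ℤ × ℤ → ℤ) (E M : Set Edge) : F :=
  (∏ᶠ f ∈ innerF i₀ j₀ k₀ k, tv f ^ (faceExp k E M f - 1)) *
  (∏ᶠ f ∈ bdryF i₀ j₀ k₀ k, tv f ^ faceExp k E M f)

/-- The face-weight over a set `S` of faces, all of them closed. -/
def wfClosed (k : ℤ × ℤ → ℤ) (E M : Set Edge) (S : Set (ℤ × ℤ)) : F :=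
  ∏ᶠ f ∈ S, tv f ^ (faceExp k E M f - 1)

/-- The `c`-exponent function of an edge (an element of the abelian group of `ℤ`-valued
exponent functions on `ℤ × ℤ`):  a white-black horizontal edge `e = h i j` (face
`b = (i,j)` below it) carries `p̄_b = (∏_{α ≥ j + k(i,j) + 2} c(i,α))⁻¹`; a black-white
horizontal edge `e = h i j` (face `a = (i,j+1)` above it) carries
`p_a = ∏_{α ≥ (j+1) - k(i,j+1) - 1} c(i,α)`; other edges carry no `c`'s.  Colors are read
in the surface `kc`, heights in the surface `kt`. -/
def edgeCExp (kc kt : ℤ × ℤ → ℤ) : Edge → ℤ × ℤ → ℤ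
  | Edge.h i j => fun v =>
      if isWhite kc (Edge.ends kc (Edge.h i j)).1 then
        if v.1 = i ∧ j + kt (i, j) + 2 ≤ v.2 then -1 else 0
      else
        if v.1 = i ∧ j - kt (i, j + 1) ≤ v.2 then 1 else 0
  | _ => fun _ => 0

/-- The `t`-part of the edge-weight: `∏ t(f)⁻¹` over the faces `f ∈ S` incident to `e`. -/
def edgeTPart (k : ℤ × ℤ → ℤ) (S : Set (ℤ × ℤ)) (e : Edge) : F :=
  ∏ᶠ f ∈ {f ∈ S | e.isSide k f}, (tv f)⁻¹

/-- Evaluation of a (finitely supported) exponent function as a Laurent monomial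
in the `c(i,j)`. -/
def evalExp (g : ℤ × ℤ → ℤ) : F := ∏ᶠ v : ℤ × ℤ, cv v ^ g v

/-- Left-most vertices lying south-west of the center face `(i₀,j₀)`. -/
def VleftSW (i₀ j₀ : ℤ) (k : ℤ × ℤ → ℤ) (E : Set Edge) : Set Vtx :=
  {x | x ∈ VG k E ∧ x.1.1 < i₀ ∧ x.1.2 < j₀ ∧
       ¬∃ e ∈ E, (e.isHoriz ∨ e.isDiag) ∧ (Edge.ends k e).2 = x}

/-- Right-most vertices lying south-east of the center face `(i₀,j₀)`. -/
def VrightSE (i₀ j₀ : ℤ) (k : ℤ × ℤ → ℤ) (E : Set Edge) : Set Vtx :=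
  {x | x ∈ VG k E ∧ i₀ ≤ x.1.1 ∧ x.1.2 < j₀ ∧
       ¬∃ e ∈ E, (e.isHoriz ∨ e.isDiag) ∧ (Edge.ends k e).1 = x}

/-- Left-most vertices lying north-west of the center face `(i₀,j₀)`. -/
def VleftNW (i₀ j₀ : ℤ) (k : ℤ × ℤ → ℤ) (E : Set Edge) : Set Vtx :=
  {x | x ∈ VG k E ∧ x.1.1 < i₀ ∧ j₀ ≤ x.1.2 ∧
       ¬∃ e ∈ E, (e.isHoriz ∨ e.isDiag) ∧ (Edge.ends k e).2 = x}

/-- Right-most vertices lying north-east of the center face `(i₀,j₀)`. -/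
def VrightNE (i₀ j₀ : ℤ) (k : ℤ × ℤ → ℤ) (E : Set Edge) : Set Vtx :=
  {x | x ∈ VG k E ∧ i₀ ≤ x.1.1 ∧ j₀ ≤ x.1.2 ∧
       ¬∃ e ∈ E, (e.isHoriz ∨ e.isDiag) ∧ (Edge.ends k e).1 = x}

/-- `P` is the edge set of a family of vertex-disjoint directed paths in the oriented
graph with edge set `E` whose sources are exactly `Src` and whose sinks are exactly
`Snk`. -/
def IsPathFamily (k : ℤ × ℤ → ℤ) (E P : Set Edge) (Src Snk : Set Vtx) : Prop :=
  P ⊆ E ∧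
  (∀ x ∈ Src, ({e ∈ P | Edge.src k e = x}).ncard = 1 ∧ {e ∈ P | Edge.dst k e = x} = ∅) ∧
  (∀ x ∈ Snk, ({e ∈ P | Edge.dst k e = x}).ncard = 1 ∧ {e ∈ P | Edge.src k e = x} = ∅) ∧
  (∀ x : Vtx, x ∉ Src → x ∉ Snk →
      ({e ∈ P | Edge.src k e = x}).ncard = ({e ∈ P | Edge.dst k e = x}).ncard ∧
      ({e ∈ P | Edge.src k e = x}).ncard ≤ 1) ∧
  ∀ x : Vtx, ¬ Relation.TransGen (fun a b => ∃ e ∈ P, Edge.src k e = a ∧ Edge.dst k e = b) x x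

def latticeNbrs (f : ℤ × ℤ) : Set (ℤ × ℤ) :=
  {(f.1 + 1, f.2), (f.1 - 1, f.2), (f.1, f.2 + 1), (f.1, f.2 - 1)}

/-- The diagonal of a unit square is a side of the corner face `f` only if it separates the two
corners adjacent to `f`, and it is present only if those two corners differ in height. -/
theorem Edge.exists_latticeNbrs_ne_of_isSide_d {k : ℤ × ℤ → ℤ} {a b : ℤ} {f : ℤ × ℤ}
    (hv : (Edge.d a b).valid k) (hs : (Edge.d a b).isSide k f) :
    ∃ g₁ ∈ latticeNbrs f, ∃ g₂ ∈ latticeNbrs f, k g₁ ≠ k g₂ := by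
  simp only [Edge.isSide] at hs
  split_ifs at hs with ht
  · simp only [Edge.tAD, decide_eq_true_eq] at ht
    rcases hs with rfl | rfl <;> exact ⟨_, by simp [latticeNbrs], _, by simp [latticeNbrs], ht⟩
  · simp only [Edge.tAD, decide_eq_true_eq, not_not] at ht
    have hAC : k (a, b) ≠ k (a + 1, b + 1) := hv.resolve_right (not_not.mpr ht)
    rcases hs with rfl | rfl <;> exact ⟨_, by simp [latticeNbrs], _, by simp [latticeNbrs], hAC⟩

theorem Edge.isSide_h_iff {k : ℤ × ℤ → ℤ} {a b i j : ℤ} :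
    (Edge.h a b).isSide k (i, j) ↔ Edge.h a b = Edge.h i j ∨ Edge.h a b = Edge.h i (j - 1) := by
  simp only [Edge.isSide, Prod.mk.injEq, Edge.h.injEq]
  omega

theorem Edge.isSide_v_iff {k : ℤ × ℤ → ℤ} {a b i j : ℤ} :
    (Edge.v a b).isSide k (i, j) ↔ Edge.v a b = Edge.v i j ∨ Edge.v a b = Edge.v (i - 1) j := by
  simp only [Edge.isSide, Prod.mk.injEq, Edge.v.injEq]
  omega

theorem square_face_general
    (k : ℤ × ℤ → ℤ)
    (i j : ℤ)
    (hn1 : k (i - 1, j) = k (i + 1, j)) (hn2 : k (i, j - 1) = k (i + 1, j))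
    (hn3 : k (i, j + 1) = k (i + 1, j)) :
    {e : Edge | e.valid k ∧ e.isSide k (i, j)} =
      {Edge.h i j, Edge.h i (j - 1), Edge.v i j, Edge.v (i - 1) j} := by
  have hflat : ∀ g ∈ latticeNbrs (i, j), k g = k (i + 1, j) := by
    simp only [latticeNbrs, Set.mem_insert_iff, Set.mem_singleton_iff]
    rintro g (rfl | rfl | rfl | rfl) <;> first | rfl | assumption
  ext e
  cases e with
  | h a b => simp [Edge.valid, Edge.isSide_h_iff]
  | v a b => simp [Edge.valid, Edge.isSide_v_iff]
  | d a b =>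
    simp only [Set.mem_ofPred_eq, Set.mem_insert_iff, Set.mem_singleton_iff, reduceCtorEq,
      or_self, iff_false, not_and]
    intro hv hs
    obtain ⟨g₁, hg₁, g₂, hg₂, hne⟩ := Edge.exists_latticeNbrs_ne_of_isSide_d hv hs
    exact hne ((hflat g₁ hg₁).trans (hflat g₂ hg₂).symm)

/-- **Square faces** (Proposition `prop:main`, part 1): if `(i,j) ∈ F̊` and all four
lattice-neighbours of `(i,j)` have the same height, then the face `(i,j)` of `G` is a
square: its sides are exactly the two horizontal edges `h i j`, `h i (j-1)` and the two
vertical edges `v i j`, `v (i-1) j`. -/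
theorem square_face
    (i₀ j₀ k₀ : ℤ) (k : ℤ × ℤ → ℤ)
    (hstep : SteppedSurface k)
    (hodd : Odd (i₀ + j₀ + k₀))
    (hoddk : ∀ f : ℤ × ℤ, Odd (f.1 + f.2 + k f))
    (hk0 : k (i₀, j₀) ≤ k₀)
    (hfund : ∀ f : ℤ × ℤ, fund f ≤ k f)
    (i j : ℤ) (hin : (i, j) ∈ innerF i₀ j₀ k₀ k)
    (hn1 : k (i - 1, j) = k (i + 1, j)) (hn2 : k (i, j - 1) = k (i + 1, j))
    (hn3 : k (i, j + 1) = k (i + 1, j)) :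
    {e : Edge | e.valid k ∧ e.isSide k (i, j)} =
      {Edge.h i j, Edge.h i (j - 1), Edge.v i j, Edge.v (i - 1) j} :=
  square_face_general k i j hn1 hn2 hn3

end OctahedronTSystem
end
end

section
/- Boundary structure of G (Proposition prop_g): Let G = G_{p,k} be the graph with open faces associated with p and an admissible stepped surface k (with k₀ ≥ k(i₀,j₀) and k ≥ fund). Then: (1) every vertex in V_leftSW(G) ∪ V_rightNE(G) is black; (2) every vertex in V_rightSE(G) ∪ V_leftNW(G) is white; (3) |V_leftSW(G)| = |V_rightSE(G)|; (4) |V_leftNW(G)| = |V_rightNE(G)|. -/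
/-!
Whether a vertex of `G` is left- or right-most, and its colour, is decided by the four faces
around its square. In a fixed quadrant the distances of these faces to the centre are affine,
so their membership in `F̊` is a linear condition on their heights, and running through the six
height patterns of a square shows, e.g., that `V_leftSW(G)` consists of the black vertices of
the squares `(i, j)`, `j < j₀`, for which `(i + 1, j + 1)` is the first face of its row of `F̊`.

Since `k` is `1`-Lipschitz, a nonempty row of `F̊` is an interval containing `i₀`, and it is
bounded because `k ≥ fund ≥ -1`. So each row of `F̊` meeting the central column has exactly one
first and one last face, and both `V_leftSW(G)` and `V_rightSE(G)` (resp. `V_leftNW(G)` and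
`V_rightNE(G)`) are in bijection with the same set of rows.
-/

noncomputable section
open Classical

namespace OctahedronTSystem

section Endpoints

open Edge

variable {k : ℤ × ℤ → ℤ} {E : Set Edge} {i j : ℤ} {b : Bool}

lemma mem_VG_iff :
    ((i, j), b) ∈ VG k E ↔
      (h i j ∈ E ∧ b = tAD k (i, j)) ∨ (h (i + 1) j ∈ E ∧ b = tBC k (i, j)) ∨
      (v i j ∈ E ∧ b = false) ∨ (v i (j + 1) ∈ E ∧ b = (tAD k (i, j) || tBC k (i, j))) ∨
      (d i j ∈ E ∧ (b = tAD k (i, j) ∨ b = tBC k (i, j))) := by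
  constructor
  · rintro ⟨e | e | e, he, hx⟩ <;> simp only [Edge.mem, ends, Prod.mk.injEq] at hx
    · rcases hx with ⟨⟨rfl, rfl⟩, rfl⟩ | ⟨⟨rfl, rfl⟩, rfl⟩
      · exact Or.inr (Or.inl ⟨by simpa using he, rfl⟩)
      · exact Or.inl ⟨he, rfl⟩
    · rcases hx with ⟨⟨rfl, rfl⟩, rfl⟩ | ⟨⟨rfl, rfl⟩, rfl⟩
      · exact Or.inr (Or.inr (Or.inr (Or.inl ⟨by simpa using he, rfl⟩)))
      · exact Or.inr (Or.inr (Or.inl ⟨he, rfl⟩))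
    · rcases hx with ⟨⟨rfl, rfl⟩, rfl⟩ | ⟨⟨rfl, rfl⟩, rfl⟩ <;> simp [he]
  · rintro (⟨he, rfl⟩ | ⟨he, rfl⟩ | ⟨he, rfl⟩ | ⟨he, rfl⟩ | ⟨he, rfl | rfl⟩)
    · exact ⟨_, he, Or.inr rfl⟩
    · exact ⟨_, he, Or.inl (by simp [ends])⟩
    · exact ⟨_, he, Or.inr rfl⟩
    · exact ⟨_, he, Or.inl (by simp [ends])⟩
    · exact ⟨_, he, Or.inl rfl⟩
    · exact ⟨_, he, Or.inr rfl⟩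

lemma exists_horiz_or_diag_right_end_iff :
    (∃ e ∈ E, (e.isHoriz ∨ e.isDiag) ∧ (ends k e).2 = ((i, j), b)) ↔
      (h i j ∈ E ∧ b = tAD k (i, j)) ∨ (d i j ∈ E ∧ b = tBC k (i, j)) := by
  constructor
  · rintro ⟨e | e | e, he, hd | hd, hx⟩ <;> simp only [isHoriz, isDiag] at hd <;>
      simp only [ends, Prod.mk.injEq] at hx <;> obtain ⟨⟨rfl, rfl⟩, rfl⟩ := hx <;> simp [he]
  · rintro (⟨he, rfl⟩ | ⟨he, rfl⟩)
    · exact ⟨_, he, Or.inl trivial, rfl⟩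
    · exact ⟨_, he, Or.inr trivial, rfl⟩

lemma exists_horiz_or_diag_left_end_iff :
    (∃ e ∈ E, (e.isHoriz ∨ e.isDiag) ∧ (ends k e).1 = ((i, j), b)) ↔
      (h (i + 1) j ∈ E ∧ b = tBC k (i, j)) ∨ (d i j ∈ E ∧ b = tAD k (i, j)) := by
  constructor
  · rintro ⟨e | e | e, he, hd | hd, hx⟩ <;> simp only [isHoriz, isDiag] at hd <;>
      simp only [ends, Prod.mk.injEq] at hx <;> obtain ⟨⟨rfl, rfl⟩, rfl⟩ := hx <;> simp [he]
  · rintro (⟨he, rfl⟩ | ⟨he, rfl⟩)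
    · exact ⟨_, he, Or.inl trivial, by simp [ends]⟩
    · exact ⟨_, he, Or.inr trivial, rfl⟩

end Endpoints

section SteppedSurface

variable {k : ℤ × ℤ → ℤ}

lemma SteppedSurface.step_right (hk : SteppedSurface k) (i j : ℤ) :
    k (i + 1, j) = k (i, j) + 1 ∨ k (i + 1, j) = k (i, j) - 1 := by
  have := hk (i + 1, j) (i, j) (by simp)
  rcases (abs_eq zero_le_one).1 this with h | h <;> omega

lemma SteppedSurface.step_up (hk : SteppedSurface k) (i j : ℤ) :
    k (i, j + 1) = k (i, j) + 1 ∨ k (i, j + 1) = k (i, j) - 1 := by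
  have := hk (i, j + 1) (i, j) (by simp)
  rcases (abs_eq zero_le_one).1 this with h | h <;> omega

lemma SteppedSurface.square_cases (hk : SteppedSurface k) (i j : ℤ) :
    (k (i + 1, j) = k (i, j) - 1 ∧ k (i + 1, j + 1) = k (i, j) ∧ k (i, j + 1) = k (i, j) - 1) ∨
    (k (i + 1, j) = k (i, j) + 1 ∧ k (i + 1, j + 1) = k (i, j) ∧ k (i, j + 1) = k (i, j) + 1) ∨
    (k (i + 1, j) = k (i, j) + 1 ∧ k (i + 1, j + 1) = k (i, j) ∧ k (i, j + 1) = k (i, j) - 1) ∨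
    (k (i + 1, j) = k (i, j) - 1 ∧ k (i + 1, j + 1) = k (i, j) ∧ k (i, j + 1) = k (i, j) + 1) ∨
    (k (i + 1, j) = k (i, j) + 1 ∧ k (i + 1, j + 1) = k (i, j) + 2 ∧
      k (i, j + 1) = k (i, j) + 1) ∨
    (k (i + 1, j) = k (i, j) - 1 ∧ k (i + 1, j + 1) = k (i, j) - 2 ∧
      k (i, j + 1) = k (i, j) - 1) := by
  rcases hk.step_right i j with h₁ | h₁ <;> rcases hk.step_up i j with h₂ | h₂ <;>
    rcases hk.step_right i (j + 1) with h₃ | h₃ <;> rcases hk.step_up (i + 1) j with h₄ | h₄ <;>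
    omega

lemma SteppedSurface.abs_sub_le_of_le (hk : SteppedSurface k) (r : ℤ) {a i : ℤ} (hai : a ≤ i) :
    |k (i, r) - k (a, r)| ≤ i - a := by
  induction i, hai using Int.leInduction with
  | base => simp
  | succ i _ ih =>
    rw [abs_le] at ih ⊢
    rcases hk.step_right i r with h | h <;> constructor <;> linarith [ih.1, ih.2]

end SteppedSurface

section Region

open Edge

variable {i₀ j₀ k₀ : ℤ} {k : ℤ × ℤ → ℤ}

lemma mem_innerF_iff {i j : ℤ} :
    (i, j) ∈ innerF i₀ j₀ k₀ k ↔ |i - i₀| + |j - j₀| < k₀ - k (i, j) := Iff.rfl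

lemma h_mem_EG_iff {i j : ℤ} :
    h i j ∈ EG i₀ j₀ k₀ k ↔ (i, j) ∈ innerF i₀ j₀ k₀ k ∨ (i, j + 1) ∈ innerF i₀ j₀ k₀ k := by
  simp only [EG, Set.mem_ofPred_eq, valid, isSide, true_and, and_or_left, exists_or,
    exists_eq_right]

lemma v_mem_EG_iff {i j : ℤ} :
    v i j ∈ EG i₀ j₀ k₀ k ↔ (i, j) ∈ innerF i₀ j₀ k₀ k ∨ (i + 1, j) ∈ innerF i₀ j₀ k₀ k := by
  simp only [EG, Set.mem_ofPred_eq, valid, isSide, true_and, and_or_left, exists_or,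
    exists_eq_right]

lemma d_mem_EG_iff {i j : ℤ} :
    d i j ∈ EG i₀ j₀ k₀ k ↔
      (k (i + 1, j) ≠ k (i, j + 1) ∧
        ((i, j) ∈ innerF i₀ j₀ k₀ k ∨ (i + 1, j + 1) ∈ innerF i₀ j₀ k₀ k)) ∨
      (k (i + 1, j) = k (i, j + 1) ∧ k (i, j) ≠ k (i + 1, j + 1) ∧
        ((i + 1, j) ∈ innerF i₀ j₀ k₀ k ∨ (i, j + 1) ∈ innerF i₀ j₀ k₀ k)) := by
  simp only [EG, Set.mem_ofPred_eq, valid, isSide, tAD, decide_eq_true_eq]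
  by_cases h : k (i + 1, j) = k (i, j + 1) <;> simp [h, and_or_left, exists_or]

variable (i₀ j₀ k₀ k)

def IsLeftBoundary (r i : ℤ) : Prop :=
  i < i₀ ∧ (i + 1, r) ∈ innerF i₀ j₀ k₀ k ∧ (i, r) ∉ innerF i₀ j₀ k₀ k

def IsRightBoundary (r i : ℤ) : Prop :=
  i₀ ≤ i ∧ (i, r) ∈ innerF i₀ j₀ k₀ k ∧ (i + 1, r) ∉ innerF i₀ j₀ k₀ k

variable {i₀ j₀ k₀ k}

lemma mem_innerF_of_le_of_le (hk : SteppedSurface k) {r a i : ℤ}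
    (ha : (a, r) ∈ innerF i₀ j₀ k₀ k) (hai : a ≤ i) (hi : i ≤ i₀) :
    (i, r) ∈ innerF i₀ j₀ k₀ k := by
  have := (abs_le.1 (hk.abs_sub_le_of_le r hai)).2
  rw [mem_innerF_iff, abs_of_nonpos (by omega : a - i₀ ≤ 0)] at ha
  rw [mem_innerF_iff, abs_of_nonpos (by omega : i - i₀ ≤ 0)]
  linarith

lemma mem_innerF_of_le_of_ge (hk : SteppedSurface k) {r a i : ℤ}
    (ha : (a, r) ∈ innerF i₀ j₀ k₀ k) (hia : i ≤ a) (hi : i₀ ≤ i) :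
    (i, r) ∈ innerF i₀ j₀ k₀ k := by
  have := (abs_le.1 (hk.abs_sub_le_of_le r hia)).1
  rw [mem_innerF_iff, abs_of_nonneg (by omega : 0 ≤ a - i₀)] at ha
  rw [mem_innerF_iff, abs_of_nonneg (by omega : 0 ≤ i - i₀)]
  linarith

lemma abs_sub_le_of_mem_innerF (hfund : ∀ f : ℤ × ℤ, fund f ≤ k f) {i r : ℤ}
    (h : (i, r) ∈ innerF i₀ j₀ k₀ k) : |i - i₀| ≤ k₀ := by
  have hf := hfund (i, r)
  have := Int.emod_nonneg (i + r) two_ne_zero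
  have := abs_nonneg (r - j₀)
  rw [mem_innerF_iff] at h
  simp only [fund] at hf
  linarith

lemma IsLeftBoundary.unique (hk : SteppedSurface k) {r i i' : ℤ}
    (h : IsLeftBoundary i₀ j₀ k₀ k r i) (h' : IsLeftBoundary i₀ j₀ k₀ k r i') : i = i' := by
  by_contra hne
  wlog hlt : i < i' generalizing i i'
  · exact this h' h (Ne.symm hne) (by omega)
  exact h'.2.2 (mem_innerF_of_le_of_le hk h.2.1 hlt h'.1.le)

lemma IsRightBoundary.unique (hk : SteppedSurface k) {r i i' : ℤ}
    (h : IsRightBoundary i₀ j₀ k₀ k r i) (h' : IsRightBoundary i₀ j₀ k₀ k r i') : i = i' := by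
  by_contra hne
  wlog hlt : i < i' generalizing i i'
  · exact this h' h (Ne.symm hne) (by omega)
  exact h.2.2 (mem_innerF_of_le_of_ge hk h'.2.1 hlt (by linarith [h.1]))

lemma exists_isLeftBoundary_iff (hk : SteppedSurface k) (hfund : ∀ f : ℤ × ℤ, fund f ≤ k f)
    {r : ℤ} : (∃ i, IsLeftBoundary i₀ j₀ k₀ k r i) ↔ (i₀, r) ∈ innerF i₀ j₀ k₀ k := by
  refine ⟨fun ⟨i, hi, hmem, _⟩ => mem_innerF_of_le_of_le hk hmem hi le_rfl, fun h => ?_⟩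
  have hbdd : ∀ i, (i, r) ∈ innerF i₀ j₀ k₀ k → i₀ - k₀ ≤ i := fun i hi => by
    linarith [(abs_le.1 (abs_sub_le_of_mem_innerF hfund hi)).1]
  obtain ⟨a, ha, hmin⟩ := Int.exists_least_of_bdd ⟨_, hbdd⟩ ⟨i₀, h⟩
  exact ⟨a - 1, by linarith [hmin i₀ h], by simpa using ha,
    fun h' => by linarith [hmin _ h']⟩

lemma exists_isRightBoundary_iff (hk : SteppedSurface k) (hfund : ∀ f : ℤ × ℤ, fund f ≤ k f)
    {r : ℤ} : (∃ i, IsRightBoundary i₀ j₀ k₀ k r i) ↔ (i₀, r) ∈ innerF i₀ j₀ k₀ k := by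
  refine ⟨fun ⟨i, hi, hmem, _⟩ => mem_innerF_of_le_of_ge hk hmem hi le_rfl, fun h => ?_⟩
  have hbdd : ∀ i, (i, r) ∈ innerF i₀ j₀ k₀ k → i ≤ i₀ + k₀ := fun i hi => by
    linarith [(abs_le.1 (abs_sub_le_of_mem_innerF hfund hi)).2]
  obtain ⟨g, hg, hmax⟩ := Int.exists_greatest_of_bdd ⟨_, hbdd⟩ ⟨i₀, h⟩
  exact ⟨g, hmax i₀ h, hg, fun h' => by linarith [hmax _ h']⟩

/- Once the quadrant fixes the signs inside `|·|` and the height pattern of the square is fixed,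
both sides are linear conditions on `k₀` and the heights of the corners. -/

lemma mem_VleftSW_iff (hk : SteppedSurface k) {i j : ℤ} {b : Bool} :
    ((i, j), b) ∈ VleftSW i₀ j₀ k (EG i₀ j₀ k₀ k) ↔
      (j < j₀ ∧ IsLeftBoundary i₀ j₀ k₀ k (j + 1) i) ∧ isWhite k ((i, j), b) = false := by
  simp only [VleftSW, IsLeftBoundary, Set.mem_ofPred_eq, mem_VG_iff,
    exists_horiz_or_diag_right_end_iff, h_mem_EG_iff, v_mem_EG_iff, d_mem_EG_iff,
    mem_innerF_iff, tAD, tBC, isWhite]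
  by_cases hq : i < i₀ ∧ j < j₀
  · rw [abs_of_neg (by omega : i - i₀ < 0), abs_of_nonpos (by omega : i + 1 - i₀ ≤ 0),
      abs_of_neg (by omega : j - j₀ < 0), abs_of_nonpos (by omega : j + 1 - j₀ ≤ 0)]
    rcases hk.square_cases i j with ⟨hB, hC, hD⟩ | ⟨hB, hC, hD⟩ | ⟨hB, hC, hD⟩ | ⟨hB, hC, hD⟩ |
      ⟨hB, hC, hD⟩ | ⟨hB, hC, hD⟩ <;> simp only [hB, hC, hD] <;> grind
  · exact iff_of_false (fun h => hq ⟨h.2.1, h.2.2.1⟩) (fun h => hq ⟨h.1.2.1, h.1.1⟩)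

lemma mem_VrightSE_iff (hk : SteppedSurface k) {i j : ℤ} {b : Bool} :
    ((i, j), b) ∈ VrightSE i₀ j₀ k (EG i₀ j₀ k₀ k) ↔
      (j < j₀ ∧ IsRightBoundary i₀ j₀ k₀ k (j + 1) i) ∧ isWhite k ((i, j), b) = true := by
  simp only [VrightSE, IsRightBoundary, Set.mem_ofPred_eq, mem_VG_iff,
    exists_horiz_or_diag_left_end_iff, h_mem_EG_iff, v_mem_EG_iff, d_mem_EG_iff,
    mem_innerF_iff, tAD, tBC, isWhite]
  by_cases hq : i₀ ≤ i ∧ j < j₀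
  · rw [abs_of_nonneg (by omega : 0 ≤ i - i₀), abs_of_pos (by omega : 0 < i + 1 - i₀),
      abs_of_neg (by omega : j - j₀ < 0), abs_of_nonpos (by omega : j + 1 - j₀ ≤ 0)]
    rcases hk.square_cases i j with ⟨hB, hC, hD⟩ | ⟨hB, hC, hD⟩ | ⟨hB, hC, hD⟩ | ⟨hB, hC, hD⟩ |
      ⟨hB, hC, hD⟩ | ⟨hB, hC, hD⟩ <;> simp only [hB, hC, hD] <;> grind
  · exact iff_of_false (fun h => hq ⟨h.2.1, h.2.2.1⟩) (fun h => hq ⟨h.1.2.1, h.1.1⟩)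

lemma mem_VleftNW_iff (hk : SteppedSurface k) {i j : ℤ} {b : Bool} :
    ((i, j), b) ∈ VleftNW i₀ j₀ k (EG i₀ j₀ k₀ k) ↔
      (j₀ ≤ j ∧ IsLeftBoundary i₀ j₀ k₀ k j i) ∧ isWhite k ((i, j), b) = true := by
  simp only [VleftNW, IsLeftBoundary, Set.mem_ofPred_eq, mem_VG_iff,
    exists_horiz_or_diag_right_end_iff, h_mem_EG_iff, v_mem_EG_iff, d_mem_EG_iff,
    mem_innerF_iff, tAD, tBC, isWhite]
  by_cases hq : i < i₀ ∧ j₀ ≤ j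
  · rw [abs_of_neg (by omega : i - i₀ < 0), abs_of_nonpos (by omega : i + 1 - i₀ ≤ 0),
      abs_of_nonneg (by omega : 0 ≤ j - j₀), abs_of_pos (by omega : 0 < j + 1 - j₀)]
    rcases hk.square_cases i j with ⟨hB, hC, hD⟩ | ⟨hB, hC, hD⟩ | ⟨hB, hC, hD⟩ | ⟨hB, hC, hD⟩ |
      ⟨hB, hC, hD⟩ | ⟨hB, hC, hD⟩ <;> simp only [hB, hC, hD] <;> grind
  · exact iff_of_false (fun h => hq ⟨h.2.1, h.2.2.1⟩) (fun h => hq ⟨h.1.2.1, h.1.1⟩)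

lemma mem_VrightNE_iff (hk : SteppedSurface k) {i j : ℤ} {b : Bool} :
    ((i, j), b) ∈ VrightNE i₀ j₀ k (EG i₀ j₀ k₀ k) ↔
      (j₀ ≤ j ∧ IsRightBoundary i₀ j₀ k₀ k j i) ∧ isWhite k ((i, j), b) = false := by
  simp only [VrightNE, IsRightBoundary, Set.mem_ofPred_eq, mem_VG_iff,
    exists_horiz_or_diag_left_end_iff, h_mem_EG_iff, v_mem_EG_iff, d_mem_EG_iff,
    mem_innerF_iff, tAD, tBC, isWhite]
  by_cases hq : i₀ ≤ i ∧ j₀ ≤ j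
  · rw [abs_of_nonneg (by omega : 0 ≤ i - i₀), abs_of_pos (by omega : 0 < i + 1 - i₀),
      abs_of_nonneg (by omega : 0 ≤ j - j₀), abs_of_pos (by omega : 0 < j + 1 - j₀)]
    rcases hk.square_cases i j with ⟨hB, hC, hD⟩ | ⟨hB, hC, hD⟩ | ⟨hB, hC, hD⟩ | ⟨hB, hC, hD⟩ |
      ⟨hB, hC, hD⟩ | ⟨hB, hC, hD⟩ <;> simp only [hB, hC, hD] <;> grind
  · exact iff_of_false (fun h => hq ⟨h.2.1, h.2.2.1⟩) (fun h => hq ⟨h.1.2.1, h.1.1⟩)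

end Region

lemma ncard_eq_ncard_rows {k : ℤ × ℤ → ℤ} {V : Set Vtx} {B : ℤ → ℤ → Prop} {c : Bool}
    (hV : ∀ i j b, ((i, j), b) ∈ V ↔ B j i ∧ isWhite k ((i, j), b) = c)
    (hB : ∀ j i i', B j i → B j i' → i = i') :
    V.ncard = {j | ∃ i, B j i}.ncard := by
  have hinj : Set.InjOn (fun x : Vtx => x.1.2) V := by
    rintro ⟨⟨i, j⟩, b⟩ hx ⟨⟨i', j'⟩, b'⟩ hx' (rfl : j = j')
    rw [hV] at hx hx'
    obtain rfl := hB j i i' hx.1 hx'.1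
    have := hx.2.trans hx'.2.symm
    rw [isWhite, isWhite, Bool.bne_right_inj] at this
    exact congrArg _ this
  have himage : (fun x : Vtx => x.1.2) '' V = {j | ∃ i, B j i} := by
    ext j
    refine ⟨fun ⟨⟨⟨i, _⟩, b⟩, hx, hj⟩ => ⟨i, hj ▸ ((hV _ _ b).1 hx).1⟩, fun ⟨i, hi⟩ => ?_⟩
    exact ⟨((i, j), decide (k (i + 1, j) < k (i, j)) != c),
      (hV _ _ _).2 ⟨hi, Bool.bne_self_left _ _⟩, rfl⟩
  rw [← himage, hinj.ncard_image]

section Counting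

variable {i₀ j₀ k₀ : ℤ} {k : ℤ × ℤ → ℤ}

lemma ncard_VleftSW (hk : SteppedSurface k) (hfund : ∀ f : ℤ × ℤ, fund f ≤ k f) :
    (VleftSW i₀ j₀ k (EG i₀ j₀ k₀ k)).ncard =
      {j | j < j₀ ∧ (i₀, j + 1) ∈ innerF i₀ j₀ k₀ k}.ncard := by
  rw [ncard_eq_ncard_rows (fun _ _ _ => mem_VleftSW_iff hk)
    (fun _ _ _ h h' => h.2.unique hk h'.2)]
  simp only [exists_and_left, exists_isLeftBoundary_iff hk hfund]

lemma ncard_VrightSE (hk : SteppedSurface k) (hfund : ∀ f : ℤ × ℤ, fund f ≤ k f) :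
    (VrightSE i₀ j₀ k (EG i₀ j₀ k₀ k)).ncard =
      {j | j < j₀ ∧ (i₀, j + 1) ∈ innerF i₀ j₀ k₀ k}.ncard := by
  rw [ncard_eq_ncard_rows (fun _ _ _ => mem_VrightSE_iff hk)
    (fun _ _ _ h h' => h.2.unique hk h'.2)]
  simp only [exists_and_left, exists_isRightBoundary_iff hk hfund]

lemma ncard_VleftNW (hk : SteppedSurface k) (hfund : ∀ f : ℤ × ℤ, fund f ≤ k f) :
    (VleftNW i₀ j₀ k (EG i₀ j₀ k₀ k)).ncard =
      {j | j₀ ≤ j ∧ (i₀, j) ∈ innerF i₀ j₀ k₀ k}.ncard := by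
  rw [ncard_eq_ncard_rows (fun _ _ _ => mem_VleftNW_iff hk)
    (fun _ _ _ h h' => h.2.unique hk h'.2)]
  simp only [exists_and_left, exists_isLeftBoundary_iff hk hfund]

lemma ncard_VrightNE (hk : SteppedSurface k) (hfund : ∀ f : ℤ × ℤ, fund f ≤ k f) :
    (VrightNE i₀ j₀ k (EG i₀ j₀ k₀ k)).ncard =
      {j | j₀ ≤ j ∧ (i₀, j) ∈ innerF i₀ j₀ k₀ k}.ncard := by
  rw [ncard_eq_ncard_rows (fun _ _ _ => mem_VrightNE_iff hk)
    (fun _ _ _ h h' => h.2.unique hk h'.2)]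
  simp only [exists_and_left, exists_isRightBoundary_iff hk hfund]

end Counting

theorem boundary_structure_general
    (i₀ j₀ k₀ : ℤ) (k : ℤ × ℤ → ℤ)
    (hstep : SteppedSurface k)
    (hfund : ∀ f : ℤ × ℤ, fund f ≤ k f)
    :
    (∀ x ∈ VleftSW i₀ j₀ k (EG i₀ j₀ k₀ k) ∪ VrightNE i₀ j₀ k (EG i₀ j₀ k₀ k),
        isWhite k x = false) ∧
    (∀ x ∈ VrightSE i₀ j₀ k (EG i₀ j₀ k₀ k) ∪ VleftNW i₀ j₀ k (EG i₀ j₀ k₀ k),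
        isWhite k x = true) ∧
    (VleftSW i₀ j₀ k (EG i₀ j₀ k₀ k)).ncard = (VrightSE i₀ j₀ k (EG i₀ j₀ k₀ k)).ncard ∧
    (VleftNW i₀ j₀ k (EG i₀ j₀ k₀ k)).ncard = (VrightNE i₀ j₀ k (EG i₀ j₀ k₀ k)).ncard := by
  refine ⟨?_, ?_, ?_, ?_⟩
  · rintro ⟨⟨i, j⟩, b⟩ (hx | hx)
    · exact ((mem_VleftSW_iff hstep).1 hx).2
    · exact ((mem_VrightNE_iff hstep).1 hx).2
  · rintro ⟨⟨i, j⟩, b⟩ (hx | hx)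
    · exact ((mem_VrightSE_iff hstep).1 hx).2
    · exact ((mem_VleftNW_iff hstep).1 hx).2
  · rw [ncard_VleftSW hstep hfund, ncard_VrightSE hstep hfund]
  · rw [ncard_VleftNW hstep hfund, ncard_VrightNE hstep hfund]

/-- **Boundary structure of `G`** (Proposition `prop_g`): (1) every vertex in
`V_leftSW(G) ∪ V_rightNE(G)` is black; (2) every vertex in `V_rightSE(G) ∪ V_leftNW(G)`
is white; (3) `|V_leftSW(G)| = |V_rightSE(G)|`; (4) `|V_leftNW(G)| = |V_rightNE(G)|`. -/
theorem boundary_structure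
    (i₀ j₀ k₀ : ℤ) (k : ℤ × ℤ → ℤ)
    (hstep : SteppedSurface k)
    (hodd : Odd (i₀ + j₀ + k₀))
    (hoddk : ∀ f : ℤ × ℤ, Odd (f.1 + f.2 + k f))
    (hk0 : k (i₀, j₀) ≤ k₀)
    (hfund : ∀ f : ℤ × ℤ, fund f ≤ k f)
    :
    (∀ x ∈ VleftSW i₀ j₀ k (EG i₀ j₀ k₀ k) ∪ VrightNE i₀ j₀ k (EG i₀ j₀ k₀ k),
        isWhite k x = false) ∧
    (∀ x ∈ VrightSE i₀ j₀ k (EG i₀ j₀ k₀ k) ∪ VleftNW i₀ j₀ k (EG i₀ j₀ k₀ k),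
        isWhite k x = true) ∧
    (VleftSW i₀ j₀ k (EG i₀ j₀ k₀ k)).ncard = (VrightSE i₀ j₀ k (EG i₀ j₀ k₀ k)).ncard ∧
    (VleftNW i₀ j₀ k (EG i₀ j₀ k₀ k)).ncard = (VrightNE i₀ j₀ k (EG i₀ j₀ k₀ k)).ncard :=
  boundary_structure_general i₀ j₀ k₀ k hstep hfund

end OctahedronTSystem
end
end

section
/- I–J exchange identity (key step in the proof of Proposition 3.5): For every commutative monoid C, every function c : ℤ×ℤ → C, and every (i,j,m) ∈ ℤ³, one has I(i,j,m−1)·J(i,j−1,m)·J(i,j+1,m)·I(i,j,m+1) = J(i,j,m−1)·I(i−1,j,m)·I(i+1,j,m)·J(i,j,m+1); equivalently, in a commutative group, ( I(i,j,m−1)·J(i,j−1,m)·J(i,j+1,m) ) / ( J(i,j,m−1)·I(i−1,j,m)·I(i+1,j,m) ) = J(i,j,m+1)/I(i,j,m+1). -/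
noncomputable section
open Classical

namespace OctahedronTSystem

/-! `I` and `J` are both products of `c` over a window `[t - r, t + r]` centred at a lattice
point: `J(i,j,m)` along the column through `(i,j)` with radius `m`, `I(i,j,m)` along the row
with radius `-m-1`. By inclusion–exclusion of intervals, a window product `S(t,r)` satisfies
`S(t-1,r)·S(t+1,r) = S(t,r-1)·S(t,r+1)`, except for `r ∈ {0,-1}`, where the left side lacks
the centre factor. Since `m ∈ {0,-1}` exactly when `-m-1 ∈ {0,-1}`, the row and column defects
are the same factor `c(i,j)` and balance each other. -/

section WindowProd

open Finset

variable {M : Type*} [CommMonoid M]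

def windowProd (f : ℤ → M) (t r : ℤ) : M :=
  ∏ x ∈ Icc (t - r) (t + r), f x

theorem windowProd_eq_prod_Icc_add (f : ℤ → M) (t r : ℤ) :
    windowProd f t r = ∏ a ∈ Icc (-r) r, f (t + a) := by
  rw [windowProd, sub_eq_add_neg, ← map_add_left_Icc, prod_map]
  rfl

theorem windowProd_exchange (f : ℤ → M) (t r : ℤ) :
    windowProd f (t - 1) r * windowProd f (t + 1) r * (if r = 0 ∨ r = -1 then f t else 1) =
      windowProd f t (r - 1) * windowProd f t (r + 1) := by
  have hinter : Icc (t - 1 - r) (t - 1 + r) ∩ Icc (t + 1 - r) (t + 1 + r) =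
      Icc (t - (r - 1)) (t + (r - 1)) := by
    ext; simp only [mem_inter, mem_Icc]; omega
  unfold windowProd
  rw [← prod_union_inter, hinter, mul_right_comm, mul_comm _ (∏ x ∈ Icc (t - (r + 1)) _, f x)]
  split_ifs with hr
  · have hunion : Icc (t - 1 - r) (t - 1 + r) ∪ Icc (t + 1 - r) (t + 1 + r) =
        (Icc (t - (r + 1)) (t + (r + 1))).erase t := by
      ext; simp only [mem_union, mem_erase, mem_Icc]; omega
    rw [hunion, prod_erase_mul _ _ (by simp only [mem_Icc]; omega)]
  · have hunion : Icc (t - 1 - r) (t - 1 + r) ∪ Icc (t + 1 - r) (t + 1 + r) =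
        Icc (t - (r + 1)) (t + (r + 1)) := by
      ext; simp only [mem_union, mem_Icc]; omega
    rw [hunion, mul_one]

end WindowProd

theorem coefJ_eq_windowProd {C : Type*} [CommMonoid C] (c : ℤ × ℤ → C) (i j m : ℤ) :
    coefJ c i j m = windowProd (fun b => c (i, b)) j m :=
  (windowProd_eq_prod_Icc_add (fun b => c (i, b)) j m).symm

theorem coefI_eq_windowProd {C : Type*} [CommMonoid C] (c : ℤ × ℤ → C) (i j m : ℤ) :
    coefI c i j m = windowProd (fun a => c (a, j)) i (-m - 1) := by
  rw [windowProd_eq_prod_Icc_add, coefI, neg_sub, sub_neg_eq_add, add_comm 1 m]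

theorem coefI_coefJ_exchange {C : Type*} [CommMonoid C] (c : ℤ × ℤ → C) (i j m : ℤ) :
    coefI c i j (m - 1) * coefJ c i (j - 1) m * coefJ c i (j + 1) m * coefI c i j (m + 1) =
      coefJ c i j (m - 1) * coefI c (i - 1) j m * coefI c (i + 1) j m * coefJ c i j (m + 1) := by
  have hcol := windowProd_exchange (fun b => c (i, b)) j m
  have hrow := windowProd_exchange (fun a => c (a, j)) i (-m - 1)
  have hdefect : (-m - 1 = 0 ∨ -m - 1 = -1) ↔ (m = 0 ∨ m = -1) := by omega
  simp only [hdefect] at hrow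
  simp only [coefI_eq_windowProd, coefJ_eq_windowProd,
    show -(m - 1) - 1 = -m - 1 + 1 by ring, show -(m + 1) - 1 = -m - 1 - 1 by ring]
  grind

/-- The I–J exchange identity: for every commutative monoid `C`, every `c : ℤ×ℤ → C` and
every `(i,j,m)`, one has
`I(i,j,m-1)·J(i,j-1,m)·J(i,j+1,m)·I(i,j,m+1) = J(i,j,m-1)·I(i-1,j,m)·I(i+1,j,m)·J(i,j,m+1)`;
equivalently, in a commutative group,
`I(i,j,m-1)·J(i,j-1,m)·J(i,j+1,m) / (J(i,j,m-1)·I(i-1,j,m)·I(i+1,j,m)) = J(i,j,m+1)/I(i,j,m+1)`. -/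
theorem IJ_exchange_identity :
    (∀ (C : Type) [CommMonoid C] (c : ℤ × ℤ → C) (i j m : ℤ),
        coefI c i j (m - 1) * coefJ c i (j - 1) m * coefJ c i (j + 1) m *
            coefI c i j (m + 1) =
          coefJ c i j (m - 1) * coefI c (i - 1) j m * coefI c (i + 1) j m *
            coefJ c i j (m + 1)) ∧
    (∀ (G : Type) [CommGroup G] (c : ℤ × ℤ → G) (i j m : ℤ),
        coefI c i j (m - 1) * coefJ c i (j - 1) m * coefJ c i (j + 1) m /
            (coefJ c i j (m - 1) * coefI c (i - 1) j m * coefI c (i + 1) j m) =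
          coefJ c i j (m + 1) / coefI c i j (m + 1)) := by
  refine ⟨fun C _ => coefI_coefJ_exchange, fun G _ c i j m => ?_⟩
  rw [div_eq_div_iff_mul_eq_mul, coefI_coefJ_exchange, mul_comm (coefJ c i j (m + 1))]

end OctahedronTSystem
end
end

section
/- Projected and adjusted surfaces are stepped surfaces: For any p = (i₀,j₀,k₀) ∈ ℤ³, the function proj_p(i,j) = k₀ − |i−i₀| − |j−j₀| is a stepped surface. Moreover, if k is a stepped surface with k(i₀,j₀) ≡ k₀ (mod 2), then the adjusted surface k_p(i,j) = min( k(i,j), proj_p(i,j) ) is again a stepped surface. -/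
/-! Every unit step changes the parity of a stepped surface, so `k (i, j) + i + j` has constant
parity. The projected surface is stepped because each coordinate term `|x - c|` is, and it has
the parity of `k` exactly when `k (i₀, j₀) ≡ k₀`. Two stepped surfaces of equal parity are
congruent mod 2 at every point while each moves by `±1` along an edge, so their minimum also
moves by `±1`. -/

noncomputable section
open Classical

namespace OctahedronTSystem

theorem abs_abs_sub_abs_eq_one {x y : ℤ} (h : |x - y| = 1) : |(|x| - |y|)| = 1 := by
  rcases abs_cases x with ⟨hx, _⟩ | ⟨hx, _⟩ <;> rcases abs_cases y with ⟨hy, _⟩ | ⟨hy, _⟩ <;>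
    rw [hx, hy] <;> rw [abs_eq zero_le_one] at h ⊢ <;> omega

theorem abs_min_sub_min_eq_one {a b c d : ℤ} (hab : a ≡ b [ZMOD 2]) (hac : |a - c| = 1)
    (hbd : |b - d| = 1) : |min a b - min c d| = 1 := by
  rw [abs_eq zero_le_one] at hac hbd ⊢
  unfold Int.ModEq at hab
  omega

theorem eq_or_eq_of_abs_add_abs_eq_one {x y : ℤ} (h : |x| + |y| = 1) :
    (|x| = 1 ∧ y = 0) ∨ (x = 0 ∧ |y| = 1) := by
  have := abs_nonneg y
  rcases (abs_nonneg x).eq_or_lt with hx | hx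
  · exact Or.inr ⟨abs_eq_zero.1 hx.symm, by omega⟩
  · exact Or.inl ⟨by omega, abs_eq_zero.1 (by omega)⟩

theorem steppedSurface_sub {g h : ℤ → ℤ} (hg : ∀ x y, |x - y| = 1 → |g x - g y| = 1)
    (hh : ∀ x y, |x - y| = 1 → |h x - h y| = 1) : SteppedSurface fun v => g v.1 - h v.2 := by
  intro a b hab
  rcases eq_or_eq_of_abs_add_abs_eq_one hab with ⟨h1, h2⟩ | ⟨h1, h2⟩
  · dsimp only
    rw [sub_eq_zero.1 h2, sub_sub_sub_cancel_right]
    exact hg _ _ h1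
  · dsimp only
    rw [sub_eq_zero.1 h1, sub_sub_sub_cancel_left, abs_sub_comm]
    exact hh _ _ h2

theorem steppedSurface_proj (i₀ j₀ k₀ : ℤ) :
    SteppedSurface fun v => k₀ - |v.1 - i₀| - |v.2 - j₀| :=
  steppedSurface_sub (g := fun x => k₀ - |x - i₀|) (h := fun y => |y - j₀|)
    (fun x y h => by
      rw [sub_sub_sub_cancel_left, abs_sub_comm]
      exact abs_abs_sub_abs_eq_one (x := x - i₀) (by rwa [sub_sub_sub_cancel_right]))
    (fun x y h => abs_abs_sub_abs_eq_one (x := x - j₀) (by rwa [sub_sub_sub_cancel_right]))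

namespace SteppedSurface

variable {k l : ℤ × ℤ → ℤ}

theorem intCast_add_add_eq_of_adj (hk : SteppedSurface k) {a b : ℤ × ℤ}
    (hab : |a.1 - b.1| + |a.2 - b.2| = 1) :
    ((k a + a.1 + a.2 : ℤ) : ZMod 2) = ((k b + b.1 + b.2 : ℤ) : ZMod 2) := by
  rw [ZMod.intCast_eq_intCast_iff']
  have hk := hk a b hab
  rw [abs_eq zero_le_one] at hk
  rcases eq_or_eq_of_abs_add_abs_eq_one hab with ⟨h1, h2⟩ | ⟨h1, h2⟩ <;>
    simp only [abs_eq zero_le_one] at h1 h2 <;> push_cast <;> omega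

theorem add_add_modEq (hk : SteppedSurface k) (a b : ℤ × ℤ) :
    k a + a.1 + a.2 ≡ k b + b.1 + b.2 [ZMOD 2] := by
  set φ : ℤ × ℤ → ZMod 2 := fun v => ((k v + v.1 + v.2 : ℤ) : ZMod 2)
  have row (j : ℤ) : Function.Periodic (fun i => φ (i, j)) 1 := fun i =>
    hk.intCast_add_add_eq_of_adj (by simp)
  have col (i : ℤ) : Function.Periodic (fun j => φ (i, j)) 1 := fun j =>
    hk.intCast_add_add_eq_of_adj (by simp)
  have hφ (v : ℤ × ℤ) : φ v = φ (0, 0) := calc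
    φ v = φ (v.1, 0) := by simpa using (col v.1).int_mul_eq v.2
    _ = φ (0, 0) := by simpa using (row 0).int_mul_eq v.1
  exact_mod_cast (ZMod.intCast_eq_intCast_iff _ _ 2).1 ((hφ a).trans (hφ b).symm)

theorem min (hk : SteppedSurface k) (hl : SteppedSurface l) (v₀ : ℤ × ℤ)
    (h : k v₀ ≡ l v₀ [ZMOD 2]) : SteppedSurface fun v => min (k v) (l v) := by
  intro a b hab
  have hkl : k a + a.1 + a.2 ≡ l a + a.1 + a.2 [ZMOD 2] := calc
    _ ≡ k v₀ + v₀.1 + v₀.2 [ZMOD 2] := hk.add_add_modEq a v₀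
    _ ≡ l v₀ + v₀.1 + v₀.2 [ZMOD 2] := (h.add_right _).add_right _
    _ ≡ l a + a.1 + a.2 [ZMOD 2] := hl.add_add_modEq v₀ a
  exact abs_min_sub_min_eq_one ((hkl.add_right_cancel' a.2).add_right_cancel' a.1)
    (hk a b hab) (hl a b hab)

end SteppedSurface

/-- The surface projected from a point `p = (i₀,j₀,k₀)` is a stepped surface and, for any
stepped surface `k` with `k(i₀,j₀) ≡ k₀ (mod 2)`, the adjusted surface
`k_p = min (k, proj_p)` is again a stepped surface. -/
theorem proj_and_adjusted_are_stepped (i₀ j₀ k₀ : ℤ) :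
    SteppedSurface (fun v => k₀ - |v.1 - i₀| - |v.2 - j₀|) ∧
    ∀ k : ℤ × ℤ → ℤ, SteppedSurface k → k (i₀, j₀) ≡ k₀ [ZMOD 2] →
      SteppedSurface (fun v => min (k v) (k₀ - |v.1 - i₀| - |v.2 - j₀|)) :=
  ⟨steppedSurface_proj i₀ j₀ k₀, fun _ hk h =>
    hk.min (steppedSurface_proj i₀ j₀ k₀) (i₀, j₀) (by simpa using h)⟩

end OctahedronTSystem
end
end
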